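/- arXiv:1604.03962 — 3 statements merged into one kernel-verified Lean document; each statement's English description precedes it below -/
import Mathlib

section
/- Lemma (hl3): in the state-label sequence (Δ_i)_{i≥0} extracted from a ticked branch b of a tableau for φ, if αUβ ∈ Δ_i then there is some d ≥ i such that β ∈ Δ_d and, for all f with i ≤ f < d, the three formulas α, αUβ and X(αUβ) all belong to Δ_f. -/
/-- LTL formulas over atomic propositions `AP`, built from atoms using
negation, conjunction, next (X) and until (U). -/
inductive LTL (AP : Type) : Type
  | atom : AP → LTL AP
  | neg : LTL AP → LTL AP
  | and : LTL AP → LTL AP → LTL AP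
  | next : LTL AP → LTL AP
  | until_ : LTL AP → LTL AP → LTL AP
  deriving DecidableEq

namespace LTL

variable {AP : Type}

/-- The shifted ω-word `σ_{≥i}`. -/
def shift (σ : ℕ → Set AP) (i : ℕ) : ℕ → Set AP := fun j => σ (i + j)

/-- Satisfaction of an LTL formula on an ω-word. -/
def Sat : (ℕ → Set AP) → LTL AP → Prop
  | σ, atom p => p ∈ σ 0
  | σ, neg α => ¬ Sat σ α
  | σ, and α β => Sat σ α ∧ Sat σ β
  | σ, next α => Sat (shift σ 1) α
  | σ, until_ α β => ∃ i, Sat (shift σ i) β ∧ ∀ j < i, Sat (shift σ j) α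

/-- A formula is satisfiable iff some ω-word satisfies it. -/
def Satisfiable (φ : LTL AP) : Prop := ∃ σ : ℕ → Set AP, Sat σ φ

/-- Standard abbreviations. -/
def or' (α β : LTL AP) : LTL AP := neg ((neg α).and (neg β))
def imp (α β : LTL AP) : LTL AP := or' (neg α) β
def iff' (α β : LTL AP) : LTL AP := (imp α β).and (imp β α)
/-- `⊤ ≡ p ∨ ¬p`. -/
def top (p : AP) : LTL AP := or' (atom p) (neg (atom p))
/-- `⊥ ≡ ¬⊤`. -/
def bot (p : AP) : LTL AP := neg (top p)
/-- `F α ≡ ⊤ U α`. -/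
def F (p : AP) (α : LTL AP) : LTL AP := (top p).until_ α
/-- `G α ≡ ¬F¬α`. -/
def G (p : AP) (α : LTL AP) : LTL AP := neg (F p (neg α))

/-- Elementary formulas: atoms, negated atoms, `Xα` and `¬Xα`. -/
def Elementary : LTL AP → Prop
  | atom _ => True
  | neg (atom _) => True
  | next _ => True
  | neg (next _) => True
  | _ => False

/-- A finite set of formulas is poised when it is nonempty, contains no direct
contradiction, and all of its members are elementary. -/
def Poised (Γ : Finset (LTL AP)) : Prop :=
  Γ.Nonempty ∧ (∀ α : LTL AP, ¬(α ∈ Γ ∧ neg α ∈ Γ)) ∧ ∀ ψ ∈ Γ, Elementary ψ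

/-- The label of the TRANSITION child: `{α : Xα ∈ Γ} ∪ {¬α : ¬Xα ∈ Γ}`. -/
def nextLabel [DecidableEq AP] (Γ : Finset (LTL AP)) : Finset (LTL AP) :=
  Γ.biUnion fun ψ =>
    match ψ with
    | next α => {α}
    | neg (next α) => {neg α}
    | _ => (∅ : Finset (LTL AP))

/-- Static rules with one child (consuming the decomposed formula). -/
inductive Static1 [DecidableEq AP] : Finset (LTL AP) → Finset (LTL AP) → Prop
  | conj (α β : LTL AP) (Δ : Finset (LTL AP)) (h : α.and β ∉ Δ) :
      Static1 (insert (α.and β) Δ) (insert α (insert β Δ))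
  | negneg (α : LTL AP) (Δ : Finset (LTL AP)) (h : neg (neg α) ∉ Δ) :
      Static1 (insert (neg (neg α)) Δ) (insert α Δ)

/-- Static rules with two children (consuming the decomposed formula). -/
inductive Static2 [DecidableEq AP] :
    Finset (LTL AP) → Finset (LTL AP) → Finset (LTL AP) → Prop
  | negconj (α β : LTL AP) (Δ : Finset (LTL AP)) (h : neg (α.and β) ∉ Δ) :
      Static2 (insert (neg (α.and β)) Δ) (insert (neg α) Δ) (insert (neg β) Δ)
  | untl (α β : LTL AP) (Δ : Finset (LTL AP)) (h : α.until_ β ∉ Δ) :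
      Static2 (insert (α.until_ β) Δ) (insert β Δ)
        (insert α (insert (next (α.until_ β)) Δ))
  | neguntl (α β : LTL AP) (Δ : Finset (LTL AP)) (h : neg (α.until_ β) ∉ Δ) :
      Static2 (insert (neg (α.until_ β)) Δ)
        (insert (neg α) (insert (neg β) Δ))
        (insert (neg β) (insert (next (neg (α.until_ β))) Δ))

/-- Label at position `i` of a list of labels (default `∅`). -/
def labelAt (L : List (Finset (LTL AP))) (i : ℕ) : Finset (LTL AP) := L.getD i ∅

/-- LOOP rule condition for a node labelled `Γ` whose list of proper-ancestor
labels (root first) is `anc`: some poised proper ancestor `u` has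
`Γ_u ⊇ Γ`, and every X-eventuality `X(αUβ)` of `Γ_u` is fulfilled by some node
`w` with `u < w ≤ v` (`v` being the current node, of index `anc.length`). -/
def LoopCond (anc : List (Finset (LTL AP))) (Γ : Finset (LTL AP)) : Prop :=
  ∃ u < anc.length, Poised (labelAt anc u) ∧ Γ ⊆ labelAt anc u ∧
    ∀ α β : LTL AP, next (α.until_ β) ∈ labelAt anc u →
      ∃ w, u < w ∧ w ≤ anc.length ∧ β ∈ labelAt (anc ++ [Γ]) w

/-- PRUNE rule condition: `u < v < w` all bear the same poised label `Γ`
(`w` the current node) and every X-eventuality of `Γ` fulfilled in `(v,w]` is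
also fulfilled in `(u,v]`. -/
def PruneCond (anc : List (Finset (LTL AP))) (Γ : Finset (LTL AP)) : Prop :=
  ∃ u v, u < v ∧ v < anc.length ∧ labelAt anc u = Γ ∧ labelAt anc v = Γ ∧
    ∀ α β : LTL AP, next (α.until_ β) ∈ Γ →
      (∃ x, v < x ∧ x ≤ anc.length ∧ β ∈ labelAt (anc ++ [Γ]) x) →
      (∃ y, u < y ∧ y ≤ v ∧ β ∈ labelAt anc y)

/-- PRUNE₀ rule condition: some proper ancestor `u` has the same poised label
`Γ` as the current node `v`, `Γ` contains at least one X-eventuality and no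
X-eventuality of `Γ` is fulfilled in `(u,v]`. -/
def Prune0Cond (anc : List (Finset (LTL AP))) (Γ : Finset (LTL AP)) : Prop :=
  ∃ u < anc.length, labelAt anc u = Γ ∧
    (∃ α β : LTL AP, next (α.until_ β) ∈ Γ) ∧
    ∀ α β : LTL AP, next (α.until_ β) ∈ Γ →
      ¬ ∃ x, u < x ∧ x ≤ anc.length ∧ β ∈ labelAt (anc ++ [Γ]) x

end LTL

open LTL in
/-- Tableau trees: ticked leaves, crossed leaves, unfinished leaves and inner
nodes with one or two children; every node carries a finite set of formulas. -/
inductive Tab (AP : Type) : Type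
  | tick : Finset (LTL AP) → Tab AP
  | cross : Finset (LTL AP) → Tab AP
  | unfin : Finset (LTL AP) → Tab AP
  | node1 : Finset (LTL AP) → Tab AP → Tab AP
  | node2 : Finset (LTL AP) → Tab AP → Tab AP → Tab AP

namespace Tab

variable {AP : Type}

def label : Tab AP → Finset (LTL AP)
  | tick Γ => Γ
  | cross Γ => Γ
  | unfin Γ => Γ
  | node1 Γ _ => Γ
  | node2 Γ _ _ => Γ

/-- A tableau is finished when every leaf is ticked or crossed. -/
def Finished : Tab AP → Prop
  | tick _ => True
  | cross _ => True
  | unfin _ => False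
  | node1 _ t => t.Finished
  | node2 _ t₁ t₂ => t₁.Finished ∧ t₂.Finished

/-- A tableau is successful when it has at least one ticked leaf. -/
def Successful : Tab AP → Prop
  | tick _ => True
  | cross _ => False
  | unfin _ => False
  | node1 _ t => t.Successful
  | node2 _ t₁ t₂ => t₁.Successful ∨ t₂.Successful

end Tab

open LTL in
/-- `Valid anc t` : the tree `t` is built according to the tableau rules, where
`anc` is the list of labels of the proper ancestors of the root of `t`
(root of the whole tableau first). -/
inductive Valid {AP : Type} [DecidableEq AP] :
    List (Finset (LTL AP)) → Tab AP → Prop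
  | empty (anc) : Valid anc (Tab.tick (∅ : Finset (LTL AP)))
  | contra (anc) (Γ : Finset (LTL AP)) (α : LTL AP)
      (h1 : α ∈ Γ) (h2 : LTL.neg α ∈ Γ) : Valid anc (Tab.cross Γ)
  | unfin (anc) (Γ : Finset (LTL AP)) : Valid anc (Tab.unfin Γ)
  | static1 (anc) (Γ : Finset (LTL AP)) (t : Tab AP)
      (h : Static1 Γ t.label) (hv : Valid (anc ++ [Γ]) t) :
      Valid anc (Tab.node1 Γ t)
  | static2 (anc) (Γ : Finset (LTL AP)) (t₁ t₂ : Tab AP)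
      (h : Static2 Γ t₁.label t₂.label)
      (hv₁ : Valid (anc ++ [Γ]) t₁) (hv₂ : Valid (anc ++ [Γ]) t₂) :
      Valid anc (Tab.node2 Γ t₁ t₂)
  | loop (anc) (Γ : Finset (LTL AP)) (hp : Poised Γ) (h : LoopCond anc Γ) :
      Valid anc (Tab.tick Γ)
  | prune (anc) (Γ : Finset (LTL AP)) (hp : Poised Γ) (h : PruneCond anc Γ) :
      Valid anc (Tab.cross Γ)
  | prune0 (anc) (Γ : Finset (LTL AP)) (hp : Poised Γ) (h : Prune0Cond anc Γ) :
      Valid anc (Tab.cross Γ)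
  | transition (anc) (Γ : Finset (LTL AP)) (t : Tab AP) (hp : Poised Γ)
      (hl : ¬ LoopCond anc Γ) (hpr : ¬ PruneCond anc Γ)
      (hp0 : ¬ Prune0Cond anc Γ)
      (h : t.label = nextLabel Γ) (hv : Valid (anc ++ [Γ]) t) :
      Valid anc (Tab.node1 Γ t)

/-- `T` is a tableau for `φ`: root labelled `{φ}` and built by the rules. -/
def IsTableauFor {AP : Type} [DecidableEq AP] (φ : LTL AP) (T : Tab AP) : Prop :=
  T.label = {φ} ∧ Valid [] T

open LTL in
/-- A node must be made a leaf whenever EMPTY, CONTRADICTION, LOOP, PRUNE or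
PRUNE₀ applies to it. -/
def ForcedLeaf {AP : Type} [DecidableEq AP]
    (anc : List (Finset (LTL AP))) (Γ : Finset (LTL AP)) : Prop :=
  Γ = ∅ ∨ (∃ α : LTL AP, α ∈ Γ ∧ LTL.neg α ∈ Γ) ∨
    (Poised Γ ∧ (LoopCond anc Γ ∨ PruneCond anc Γ ∨ Prune0Cond anc Γ))

open LTL in
/-- One step of branch construction: from a node labelled `Γ` with proper
ancestor labels `anc` (root first), which is not forced to be a leaf, to a
child labelled `Δ` obtained by a static rule or by TRANSITION. -/
def BranchStep {AP : Type} [DecidableEq AP]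
    (anc : List (Finset (LTL AP))) (Γ Δ : Finset (LTL AP)) : Prop :=
  ¬ ForcedLeaf anc Γ ∧
    (Static1 Γ Δ ∨ (∃ Δ', Static2 Γ Δ Δ') ∨ (∃ Δ', Static2 Γ Δ' Δ) ∨
      (Poised Γ ∧ Δ = nextLabel Γ))

namespace LTL

/-- `seg Γ a b = ⋃ { Γ s : a ≤ s ≤ b }`. -/
def seg {AP : Type} (Γ : ℕ → Finset (LTL AP)) (a b : ℕ) : Set (LTL AP) :=
  {ψ | ∃ s, a ≤ s ∧ s ≤ b ∧ ψ ∈ Γ s}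

end LTL

open LTL in
/-- A branch `x_0, …, x_n` of a tableau for `φ` ending in a tick via EMPTY or
LOOP, described by its sequence of labels `Γ`, with `j 0 < … < j (k-1)` the
indices at which the TRANSITION rule is applied, and, in the LOOP case, `l`
the index such that `x_{j l}` is the matching poised ancestor. -/
structure TickedBranch (AP : Type) [DecidableEq AP] (φ : LTL AP) where
  n : ℕ
  Γ : ℕ → Finset (LTL AP)
  k : ℕ
  j : ℕ → ℕ
  viaEmpty : Bool
  l : ℕ
  root : Γ 0 = {φ}
  jmono : ∀ ⦃a b : ℕ⦄, a < b → b < k → j a < j b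
  jlt : ∀ i < k, j i < n
  trans_step : ∀ i < k, Poised (Γ (j i)) ∧ Γ (j i + 1) = nextLabel (Γ (j i))
  static_step : ∀ s < n, (¬ ∃ i < k, j i = s) →
    Static1 (Γ s) (Γ (s + 1)) ∨ (∃ Δ', Static2 (Γ s) (Γ (s + 1)) Δ') ∨
      (∃ Δ', Static2 (Γ s) Δ' (Γ (s + 1)))
  /-- in the EMPTY case we set `j k = n` -/
  jk : viaEmpty = true → j k = n
  empty_end : viaEmpty = true → Γ n = ∅
  loop_end : viaEmpty = false → l < k ∧ Poised (Γ n) ∧ Γ n ⊆ Γ (j l) ∧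
    ∀ α β : LTL AP, LTL.next (α.until_ β) ∈ Γ (j l) →
      ∃ w, j l < w ∧ w ≤ n ∧ β ∈ Γ w

namespace TickedBranch

open LTL

variable {AP : Type} [DecidableEq AP] {φ : LTL AP}

/-- `N = k - 1` in the EMPTY case, `N = l` in the LOOP case. -/
def N (b : TickedBranch AP φ) : ℕ := if b.viaEmpty then b.k - 1 else b.l

/-- `M = 1` in the EMPTY case, `M = k - l` in the LOOP case. -/
def M (b : TickedBranch AP φ) : ℕ := if b.viaEmpty then 1 else b.k - b.l

/-- `Δ_i` for `0 ≤ i ≤ N + M - 1` : the union of the labels strictly after the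
`(i-1)`-th TRANSITION up to the `i`-th one (reading `j_{-1} = -1`), where
`Δ_N` additionally collects the labels strictly after the `(k-1)`-th
TRANSITION up to the end `n` of the branch. -/
def deltaBase (b : TickedBranch AP φ) (i : ℕ) : Set (LTL AP) :=
  if i = b.N then
    seg b.Γ (if b.N = 0 then 0 else b.j (b.N - 1) + 1) (b.j b.N) ∪
      seg b.Γ (b.j (b.k - 1) + 1) b.n
  else if i = 0 then seg b.Γ 0 (b.j 0)
  else seg b.Γ (b.j (i - 1) + 1) (b.j i)

/-- The state-label sequence `(Δ_i)_{i ≥ 0}` extracted from the branch: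
for `i ≥ N + M`, `Δ_i = Δ_{(i-N) mod M + N}`. -/
def delta (b : TickedBranch AP φ) (i : ℕ) : Set (LTL AP) :=
  if i < b.N + b.M then b.deltaBase i else b.deltaBase ((i - b.N) % b.M + b.N)

end TickedBranch

namespace LTL

/-- Length of a formula: number of nodes of its syntax tree. -/
def length {AP : Type} : LTL AP → ℕ
  | atom _ => 1
  | neg α => α.length + 1
  | and α β => α.length + β.length + 1
  | next α => α.length + 1
  | until_ α β => α.length + β.length + 1

/-- The set of subformulas of a formula. -/
def subf {AP : Type} [DecidableEq AP] : LTL AP → Finset (LTL AP)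
  | atom p => {atom p}
  | neg α => insert (neg α) α.subf
  | and α β => insert (α.and β) (α.subf ∪ β.subf)
  | next α => insert (next α) α.subf
  | until_ α β => insert (α.until_ β) (α.subf ∪ β.subf)

/-- The closure set of `φ` :
`{ψ, ¬ψ : ψ ≤ φ} ∪ {X(αUβ), ¬X(αUβ) : αUβ ≤ φ}`. -/
def closure {AP : Type} [DecidableEq AP] (φ : LTL AP) : Finset (LTL AP) :=
  φ.subf ∪ φ.subf.image neg ∪
    φ.subf.biUnion fun ψ =>
      match ψ with
      | until_ α β => {next (α.until_ β), neg (next (α.until_ β))}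
      | _ => (∅ : Finset (LTL AP))

/-- Right-nested conjunction of a nonempty list of conjuncts. -/
def conjAll {AP : Type} : LTL AP → List (LTL AP) → LTL AP
  | γ, [] => γ
  | γ, c :: t => γ.and (conjAll c t)

end LTL

section Hl3Aux

open LTL

namespace Hl3x

variable {AP : Type} [DecidableEq AP]

/-- A static child: one of the children of a static rule. -/
def SC (Γ Δ : Finset (LTL AP)) : Prop :=
  Static1 Γ Δ ∨ (∃ Δ', Static2 Γ Δ Δ') ∨ (∃ Δ', Static2 Γ Δ' Δ)

lemma sc_next {Γ Δ : Finset (LTL AP)} (h : SC Γ Δ) {χ : LTL AP}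
    (hm : next χ ∈ Γ) : next χ ∈ Δ := by
  rcases h with h | ⟨Δ', h⟩ | ⟨Δ', h⟩
  · cases h with
    | conj α β Δ₀ h0 =>
      rcases Finset.mem_insert.mp hm with h1 | h1
      · exact absurd h1 (by simp)
      · exact Finset.mem_insert_of_mem (Finset.mem_insert_of_mem h1)
    | negneg α Δ₀ h0 =>
      rcases Finset.mem_insert.mp hm with h1 | h1
      · exact absurd h1 (by simp)
      · exact Finset.mem_insert_of_mem h1
  · cases h with
    | negconj α β Δ₀ h0 =>
      rcases Finset.mem_insert.mp hm with h1 | h1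
      · exact absurd h1 (by simp)
      · exact Finset.mem_insert_of_mem h1
    | untl α β Δ₀ h0 =>
      rcases Finset.mem_insert.mp hm with h1 | h1
      · exact absurd h1 (by simp)
      · exact Finset.mem_insert_of_mem h1
    | neguntl α β Δ₀ h0 =>
      rcases Finset.mem_insert.mp hm with h1 | h1
      · exact absurd h1 (by simp)
      · exact Finset.mem_insert_of_mem (Finset.mem_insert_of_mem h1)
  · cases h with
    | negconj α β Δ₀ h0 =>
      rcases Finset.mem_insert.mp hm with h1 | h1
      · exact absurd h1 (by simp)
      · exact Finset.mem_insert_of_mem h1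
    | untl α β Δ₀ h0 =>
      rcases Finset.mem_insert.mp hm with h1 | h1
      · exact absurd h1 (by simp)
      · exact Finset.mem_insert_of_mem (Finset.mem_insert_of_mem h1)
    | neguntl α β Δ₀ h0 =>
      rcases Finset.mem_insert.mp hm with h1 | h1
      · exact absurd h1 (by simp)
      · exact Finset.mem_insert_of_mem (Finset.mem_insert_of_mem h1)

lemma sc_until {Γ Δ : Finset (LTL AP)} (h : SC Γ Δ) {γ δ : LTL AP}
    (hm : γ.until_ δ ∈ Γ) :
    γ.until_ δ ∈ Δ ∨ δ ∈ Δ ∨ (γ ∈ Δ ∧ next (γ.until_ δ) ∈ Δ) := by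
  rcases h with h | ⟨Δ', h⟩ | ⟨Δ', h⟩
  · cases h with
    | conj α β Δ₀ h0 =>
      rcases Finset.mem_insert.mp hm with h1 | h1
      · exact absurd h1 (by simp)
      · exact Or.inl (Finset.mem_insert_of_mem (Finset.mem_insert_of_mem h1))
    | negneg α Δ₀ h0 =>
      rcases Finset.mem_insert.mp hm with h1 | h1
      · exact absurd h1 (by simp)
      · exact Or.inl (Finset.mem_insert_of_mem h1)
  · cases h with
    | negconj α β Δ₀ h0 =>
      rcases Finset.mem_insert.mp hm with h1 | h1
      · exact absurd h1 (by simp)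
      · exact Or.inl (Finset.mem_insert_of_mem h1)
    | untl α β Δ₀ h0 =>
      rcases Finset.mem_insert.mp hm with h1 | h1
      · injection h1 with e1 e2
        subst e1; subst e2
        exact Or.inr (Or.inl (Finset.mem_insert_self _ _))
      · exact Or.inl (Finset.mem_insert_of_mem h1)
    | neguntl α β Δ₀ h0 =>
      rcases Finset.mem_insert.mp hm with h1 | h1
      · exact absurd h1 (by simp)
      · exact Or.inl (Finset.mem_insert_of_mem (Finset.mem_insert_of_mem h1))
  · cases h with
    | negconj α β Δ₀ h0 =>
      rcases Finset.mem_insert.mp hm with h1 | h1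
      · exact absurd h1 (by simp)
      · exact Or.inl (Finset.mem_insert_of_mem h1)
    | untl α β Δ₀ h0 =>
      rcases Finset.mem_insert.mp hm with h1 | h1
      · injection h1 with e1 e2
        subst e1; subst e2
        exact Or.inr (Or.inr ⟨Finset.mem_insert_self _ _,
          Finset.mem_insert_of_mem (Finset.mem_insert_self _ _)⟩)
      · exact Or.inl (Finset.mem_insert_of_mem (Finset.mem_insert_of_mem h1))
    | neguntl α β Δ₀ h0 =>
      rcases Finset.mem_insert.mp hm with h1 | h1
      · exact absurd h1 (by simp)
      · exact Or.inl (Finset.mem_insert_of_mem (Finset.mem_insert_of_mem h1))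

lemma mem_nextLabel {Γ : Finset (LTL AP)} {χ : LTL AP} (h : next χ ∈ Γ) :
    χ ∈ nextLabel Γ :=
  Finset.mem_biUnion.mpr ⟨next χ, h, Finset.mem_singleton_self χ⟩

lemma poised_not_until {Γ : Finset (LTL AP)} (h : Poised Γ) (γ δ : LTL AP) :
    γ.until_ δ ∉ Γ := fun hm => h.2.2 _ hm

lemma trace {Γ : ℕ → Finset (LTL AP)} {γ δ : LTL AP} {s e : ℕ} (hse : s ≤ e)
    (hst : ∀ t, s ≤ t → t < e → SC (Γ t) (Γ (t+1)))
    (hm : γ.until_ δ ∈ Γ s) :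
    (∃ t, s ≤ t ∧ t ≤ e ∧ δ ∈ Γ t) ∨
    (γ.until_ δ ∈ Γ e) ∨
    ((∃ t, s ≤ t ∧ t ≤ e ∧ γ ∈ Γ t ∧ next (γ.until_ δ) ∈ Γ t) ∧
      next (γ.until_ δ) ∈ Γ e) := by
  revert hst
  induction e, hse using Nat.le_induction with
  | base => exact fun _ => Or.inr (Or.inl hm)
  | succ e he ih =>
    intro hst
    have step : SC (Γ e) (Γ (e+1)) := hst e he (lt_add_one e)
    rcases ih (fun t ht1 ht2 => hst t ht1 (by omega)) with
      ⟨t, h1, h2, h3⟩ | h | ⟨⟨t, h1, h2, h3, h4⟩, h5⟩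
    · exact Or.inl ⟨t, h1, by omega, h3⟩
    · rcases sc_until step h with h' | h' | ⟨hg, hX⟩
      · exact Or.inr (Or.inl h')
      · exact Or.inl ⟨e+1, by omega, le_refl _, h'⟩
      · exact Or.inr (Or.inr ⟨⟨e+1, by omega, le_refl _, hg, hX⟩, hX⟩)
    · exact Or.inr (Or.inr ⟨⟨t, h1, by omega, h3, h4⟩, sc_next step h5⟩)

end Hl3x

end Hl3Aux

namespace Hl3x

open LTL

variable {AP : Type} [DecidableEq AP] {φ : LTL AP}

/-- Lower end of segment `m`. -/
def lo (b : TickedBranch AP φ) (m : ℕ) : ℕ := if m = 0 then 0 else b.j (m-1) + 1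

lemma deltaBase_eq (b : TickedBranch AP φ) (m : ℕ) :
    b.deltaBase m = if m = b.N
      then seg b.Γ (lo b b.N) (b.j b.N) ∪ seg b.Γ (b.j (b.k-1)+1) b.n
      else seg b.Γ (lo b m) (b.j m) := by
  by_cases h1 : m = b.N
  · subst h1
    unfold TickedBranch.deltaBase lo
    rw [if_pos rfl, if_pos rfl]
  · unfold TickedBranch.deltaBase lo
    rw [if_neg h1, if_neg h1]
    by_cases h2 : m = 0
    · subst h2; rw [if_pos rfl, if_pos rfl]
    · rw [if_neg h2, if_neg h2]

lemma first_subset (b : TickedBranch AP φ) (m : ℕ) :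
    seg b.Γ (lo b m) (b.j m) ⊆ b.deltaBase m := by
  rw [deltaBase_eq]
  split_ifs with h
  · subst h; exact Set.subset_union_left
  · exact subset_rfl

lemma tail_subset (b : TickedBranch AP φ) :
    seg b.Γ (b.j (b.k-1)+1) b.n ⊆ b.deltaBase b.N := by
  rw [deltaBase_eq, if_pos rfl]
  exact Set.subset_union_right

lemma one_le_M (b : TickedBranch AP φ) : 0 < b.M := by
  cases hE : b.viaEmpty with
  | true => simp [TickedBranch.M, hE]
  | false =>
    have := (b.loop_end hE).1
    simp only [TickedBranch.M, hE, if_false, Bool.false_eq_true]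
    omega

lemma NM_k (b : TickedBranch AP φ) (hk : 0 < b.k) : b.N + b.M = b.k := by
  cases hE : b.viaEmpty with
  | true =>
    simp only [TickedBranch.M, TickedBranch.N, hE, if_true]
    omega
  | false =>
    have := (b.loop_end hE).1
    simp only [TickedBranch.M, TickedBranch.N, hE, if_false, Bool.false_eq_true]
    omega

lemma notrans_seg (b : TickedBranch AP φ) {m t : ℕ} (hmk : m < b.k)
    (h1 : lo b m ≤ t) (h2 : t < b.j m) : SC (b.Γ t) (b.Γ (t+1)) := by
  have htn : t < b.n := h2.trans (b.jlt m hmk)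
  refine b.static_step t htn ?_
  rintro ⟨i, hik, rfl⟩
  rcases lt_or_ge i m with him | him
  · have hm0 : m ≠ 0 := by omega
    rw [lo, if_neg hm0] at h1
    have hle : b.j i ≤ b.j (m-1) := by
      rcases eq_or_lt_of_le (by omega : i ≤ m - 1) with heq | hlt
      · exact le_of_eq (congrArg b.j heq)
      · exact le_of_lt (b.jmono hlt (by omega))
    omega
  · rcases eq_or_lt_of_le him with heq | hlt
    · rw [heq] at h2; omega
    · have := b.jmono hlt hik; omega

lemma notrans_tail (b : TickedBranch AP φ) (hk : 0 < b.k) {t : ℕ}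
    (h1 : b.j (b.k-1) < t) (h2 : t < b.n) : SC (b.Γ t) (b.Γ (t+1)) := by
  refine b.static_step t h2 ?_
  rintro ⟨i, hik, rfl⟩
  have hle : b.j i ≤ b.j (b.k-1) := by
    rcases eq_or_lt_of_le (by omega : i ≤ b.k - 1) with heq | hlt
    · exact le_of_eq (congrArg b.j heq)
    · exact le_of_lt (b.jmono hlt (by omega))
  omega

lemma notrans_zero (b : TickedBranch AP φ) (hk : b.k = 0) {t : ℕ}
    (h2 : t < b.n) : SC (b.Γ t) (b.Γ (t+1)) :=
  b.static_step t h2 (by rintro ⟨i, hik, -⟩; omega)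

lemma trace_seg (b : TickedBranch AP φ) {γ δ : LTL AP} {m s : ℕ} (hmk : m < b.k)
    (hs1 : lo b m ≤ s) (hs2 : s ≤ b.j m) (h : γ.until_ δ ∈ b.Γ s) :
    (∃ t, lo b m ≤ t ∧ t ≤ b.j m ∧ δ ∈ b.Γ t) ∨
      ((∃ t, lo b m ≤ t ∧ t ≤ b.j m ∧ γ ∈ b.Γ t ∧ next (γ.until_ δ) ∈ b.Γ t) ∧
        next (γ.until_ δ) ∈ b.Γ (b.j m)) := by
  rcases trace (Γ := b.Γ) hs2 (fun t ht1 ht2 => notrans_seg b hmk (by omega) ht2) h with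
    ⟨t, h1, h2, h3⟩ | h' | ⟨⟨t, h1, h2, h3, h4⟩, h5⟩
  · exact Or.inl ⟨t, by omega, h2, h3⟩
  · exact absurd h' (poised_not_until (b.trans_step m hmk).1 γ δ)
  · exact Or.inr ⟨⟨t, by omega, h2, h3, h4⟩, h5⟩

lemma trace_tail (b : TickedBranch AP φ) (hk : 0 < b.k) {γ δ : LTL AP} {s : ℕ}
    (hs1 : b.j (b.k-1) + 1 ≤ s) (hs2 : s ≤ b.n) (h : γ.until_ δ ∈ b.Γ s) :
    (∃ t, b.j (b.k-1) + 1 ≤ t ∧ t ≤ b.n ∧ δ ∈ b.Γ t) ∨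
      γ.until_ δ ∈ b.Γ b.n ∨
      ((∃ t, b.j (b.k-1) + 1 ≤ t ∧ t ≤ b.n ∧ γ ∈ b.Γ t ∧
          next (γ.until_ δ) ∈ b.Γ t) ∧
        next (γ.until_ δ) ∈ b.Γ b.n) := by
  rcases trace (Γ := b.Γ) hs2 (fun t ht1 ht2 => notrans_tail b hk (by omega) ht2) h with
    ⟨t, h1, h2, h3⟩ | h' | ⟨⟨t, h1, h2, h3, h4⟩, h5⟩
  · exact Or.inl ⟨t, by omega, h2, h3⟩
  · exact Or.inr (Or.inl h')
  · exact Or.inr (Or.inr ⟨⟨t, by omega, h2, h3, h4⟩, h5⟩)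

lemma cover (b : TickedBranch AP φ) :
    ∀ m w, b.l < m → m < b.k → b.j b.l < w → w ≤ b.j m →
      ∃ m', b.l < m' ∧ m' < b.k ∧ b.j (m'-1) + 1 ≤ w ∧ w ≤ b.j m' := by
  intro m
  induction m with
  | zero => intro w h; omega
  | succ p ih =>
    intro w hml hmk hwl hw
    by_cases hp : b.j p < w
    · refine ⟨p+1, hml, hmk, ?_, hw⟩
      simp only [Nat.add_sub_cancel]
      omega
    · push_neg at hp
      rcases eq_or_lt_of_le (Nat.lt_succ_iff.mp hml) with heq | hlt
      · rw [← heq] at hp; omega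
      · exact ih w hlt (by omega) hwl hp

end Hl3x

namespace Hl3x

open LTL

variable {AP : Type} [DecidableEq AP] {φ : LTL AP}

lemma emptyN (b : TickedBranch AP φ) (hE : b.viaEmpty = true) {γ δ : LTL AP}
    (h : γ.until_ δ ∈ b.deltaBase b.N) : δ ∈ b.deltaBase b.N := by
  have hΓn := b.empty_end hE
  have hjk := b.jk hE
  rw [deltaBase_eq, if_pos rfl, Set.mem_union] at h
  rcases Nat.eq_zero_or_pos b.k with hk0 | hk
  · -- no transitions at all
    have hN0 : b.N = 0 := by simp [TickedBranch.N, hE, hk0]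
    have hj0n : b.j 0 = b.n := by rw [← hk0]; exact hjk
    rcases h with ⟨s, hs1, hs2, hs⟩ | ⟨s, hs1, hs2, hs⟩
    · have hs2' : s ≤ b.n := by rw [hN0] at hs2; omega
      rcases trace (Γ := b.Γ) hs2' (fun t ht1 ht2 => notrans_zero b hk0 ht2) hs with
        ⟨t, h1, h2, h3⟩ | h' | ⟨-, h'⟩
      · refine first_subset b b.N ⟨t, ?_, ?_, h3⟩
        · rw [hN0]; simp [lo]
        · rw [hN0]; omega
      · rw [hΓn] at h'; exact absurd h' (Finset.notMem_empty _)
      · rw [hΓn] at h'; exact absurd h' (Finset.notMem_empty _)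
    · exfalso
      have : b.j (b.k - 1) = b.n := by
        rw [show b.k - 1 = b.k from by omega]; exact hjk
      omega
  · have hN : b.N = b.k - 1 := by simp [TickedBranch.N, hE]
    have tailproc : ∀ s, b.j (b.k-1) + 1 ≤ s → s ≤ b.n → γ.until_ δ ∈ b.Γ s →
        δ ∈ b.deltaBase b.N := by
      intro s h1 h2 h3
      rcases trace_tail b hk h1 h2 h3 with ⟨t, ht1, ht2, ht3⟩ | h' | ⟨-, h'⟩
      · exact tail_subset b ⟨t, ht1, ht2, ht3⟩
      · rw [hΓn] at h'; exact absurd h' (Finset.notMem_empty _)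
      · rw [hΓn] at h'; exact absurd h' (Finset.notMem_empty _)
    rcases h with ⟨s, hs1, hs2, hs⟩ | ⟨s, hs1, hs2, hs⟩
    · have hNk : b.N < b.k := by omega
      rcases trace_seg b hNk hs1 hs2 hs with ⟨t, ht1, ht2, ht3⟩ | ⟨-, hX⟩
      · exact first_subset b b.N ⟨t, ht1, ht2, ht3⟩
      · have hU : γ.until_ δ ∈ b.Γ (b.j b.N + 1) := by
          rw [(b.trans_step b.N hNk).2]; exact mem_nextLabel hX
        have hjN : b.j b.N = b.j (b.k - 1) := by rw [hN]
        exact tailproc (b.j b.N + 1) (by omega)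
          (by have := b.jlt b.N hNk; omega) hU
    · exact tailproc s hs1 hs2 hs

lemma loopN (b : TickedBranch AP φ) (hE : b.viaEmpty = false) {γ δ : LTL AP}
    (h : γ.until_ δ ∈ b.deltaBase b.N) :
    δ ∈ b.deltaBase b.N ∨
      (γ ∈ b.deltaBase b.N ∧ next (γ.until_ δ) ∈ b.deltaBase b.N ∧
        next (γ.until_ δ) ∈ b.Γ (b.j b.l)) := by
  obtain ⟨hlk, hpn, hsub, hful⟩ := b.loop_end hE
  have hN : b.N = b.l := by simp [TickedBranch.N, hE]
  have hk : 0 < b.k := by omega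
  rw [deltaBase_eq, if_pos rfl, Set.mem_union] at h
  rcases h with ⟨s, hs1, hs2, hs⟩ | ⟨s, hs1, hs2, hs⟩
  · have hNk : b.N < b.k := by omega
    rcases trace_seg b hNk hs1 hs2 hs with
      ⟨t, ht1, ht2, ht3⟩ | ⟨⟨t, ht1, ht2, ht3, ht4⟩, hX⟩
    · exact Or.inl (first_subset b b.N ⟨t, ht1, ht2, ht3⟩)
    · refine Or.inr ⟨first_subset b b.N ⟨t, ht1, ht2, ht3⟩,
        first_subset b b.N ⟨t, ht1, ht2, ht4⟩, ?_⟩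
      rw [hN] at hX; exact hX
  · rcases trace_tail b hk hs1 hs2 hs with
      ⟨t, ht1, ht2, ht3⟩ | h' | ⟨⟨t, ht1, ht2, ht3, ht4⟩, hX⟩
    · exact Or.inl (tail_subset b ⟨t, ht1, ht2, ht3⟩)
    · exact absurd h' (poised_not_until hpn γ δ)
    · exact Or.inr ⟨tail_subset b ⟨t, ht1, ht2, ht3⟩,
        tail_subset b ⟨t, ht1, ht2, ht4⟩, hsub hX⟩

lemma loop_target (b : TickedBranch AP φ) (hE : b.viaEmpty = false) {γ δ : LTL AP}
    (hX : next (γ.until_ δ) ∈ b.Γ (b.j b.l)) :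
    γ.until_ δ ∈ b.deltaBase (if b.N + 1 = b.N + b.M then b.N else b.N + 1) := by
  obtain ⟨hlk, -, -, -⟩ := b.loop_end hE
  have hN : b.N = b.l := by simp [TickedBranch.N, hE]
  have hM : b.M = b.k - b.l := by simp [TickedBranch.M, hE]
  have hU : γ.until_ δ ∈ b.Γ (b.j b.l + 1) := by
    rw [(b.trans_step b.l hlk).2]; exact mem_nextLabel hX
  split_ifs with hw
  · have hl1 : b.k - 1 = b.l := by omega
    refine tail_subset b ⟨b.j b.l + 1, ?_, ?_, hU⟩
    · rw [hl1]
    · have := b.jlt b.l hlk; omega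
  · have h2 : b.l + 1 < b.k := by omega
    refine first_subset b (b.N + 1) ⟨b.j b.l + 1, ?_, ?_, hU⟩
    · rw [lo, if_neg (by omega)]
      simp only [Nat.add_sub_cancel, hN]
      omega
    · have := b.jmono (lt_add_one b.l) h2
      rw [hN]; omega

lemma hit (b : TickedBranch AP φ) {γ δ : LTL AP}
    (h : γ.until_ δ ∈ b.deltaBase b.N) :
    δ ∈ b.deltaBase b.N ∨ ∃ m, b.N < m ∧ m < b.N + b.M ∧ δ ∈ b.deltaBase m := by
  cases hE : b.viaEmpty with
  | true => exact Or.inl (emptyN b hE h)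
  | false =>
    obtain ⟨hlk, hpn, hsub, hful⟩ := b.loop_end hE
    have hN : b.N = b.l := by simp [TickedBranch.N, hE]
    have hNM : b.N + b.M = b.k := NM_k b (by omega)
    rcases loopN b hE h with h' | ⟨-, -, hX⟩
    · exact Or.inl h'
    · obtain ⟨w, hw1, hw2, hw⟩ := hful γ δ hX
      by_cases hwt : b.j (b.k - 1) < w
      · exact Or.inl (tail_subset b ⟨w, by omega, hw2, hw⟩)
      · push_neg at hwt
        have hlk1 : b.l < b.k - 1 := by
          by_contra hc
          have hle : b.l = b.k - 1 := by omega
          rw [← hle] at hwt; omega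
        obtain ⟨m', hm'1, hm'2, hm'3, hm'4⟩ :=
          cover b (b.k - 1) w hlk1 (by omega) hw1 hwt
        refine Or.inr ⟨m', by omega, by omega, ?_⟩
        rw [deltaBase_eq, if_neg (by omega)]
        exact ⟨w, by rw [lo, if_neg (by omega)]; exact hm'3, hm'4, hw⟩

lemma stepb (b : TickedBranch AP φ) {γ δ : LTL AP} {m : ℕ} (hm : m < b.N + b.M)
    (h : γ.until_ δ ∈ b.deltaBase m) :
    δ ∈ b.deltaBase m ∨
      (γ ∈ b.deltaBase m ∧ next (γ.until_ δ) ∈ b.deltaBase m ∧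
        γ.until_ δ ∈ b.deltaBase (if m + 1 = b.N + b.M then b.N else m + 1)) := by
  by_cases hne : m = b.N
  · subst hne
    cases hE : b.viaEmpty with
    | true => exact Or.inl (emptyN b hE h)
    | false =>
      rcases loopN b hE h with h' | ⟨h1, h2, hX⟩
      · exact Or.inl h'
      · exact Or.inr ⟨h1, h2, loop_target b hE hX⟩
  · have hk : 0 < b.k := by
      rcases Nat.eq_zero_or_pos b.k with h0 | h0
      · exfalso
        cases hE : b.viaEmpty with
        | true =>
          have hN : b.N = b.k - 1 := by simp [TickedBranch.N, hE]
          have hM : b.M = 1 := by simp [TickedBranch.M, hE]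
          omega
        | false => have := (b.loop_end hE).1; omega
      · exact h0
    have hNM : b.N + b.M = b.k := NM_k b hk
    have hmk : m < b.k := by omega
    rw [deltaBase_eq, if_neg hne] at h
    obtain ⟨s, hs1, hs2, hs⟩ := h
    rcases trace_seg b hmk hs1 hs2 hs with
      ⟨t, ht1, ht2, ht3⟩ | ⟨⟨t, ht1, ht2, ht3, ht4⟩, hX⟩
    · exact Or.inl (first_subset b m ⟨t, ht1, ht2, ht3⟩)
    · refine Or.inr ⟨first_subset b m ⟨t, ht1, ht2, ht3⟩,
        first_subset b m ⟨t, ht1, ht2, ht4⟩, ?_⟩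
      have hU : γ.until_ δ ∈ b.Γ (b.j m + 1) := by
        rw [(b.trans_step m hmk).2]; exact mem_nextLabel hX
      split_ifs with hw
      · have hm1 : m = b.k - 1 := by omega
        refine tail_subset b ⟨b.j m + 1, ?_, ?_, hU⟩
        · rw [hm1]
        · have := b.jlt m hmk; omega
      · have hm1k : m + 1 < b.k := by omega
        refine first_subset b (m+1) ⟨b.j m + 1, ?_, ?_, hU⟩
        · rw [lo, if_neg (by omega)]
          simp only [Nat.add_sub_cancel]
          omega
        · exact Nat.succ_le_of_lt (b.jmono (lt_add_one m) hm1k)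

end Hl3x

namespace Hl3x

open LTL

variable {AP : Type} [DecidableEq AP] {φ : LTL AP}

def base (b : TickedBranch AP φ) (c : ℕ) : ℕ :=
  if c < b.N + b.M then c else (c - b.N) % b.M + b.N

lemma delta_eq (b : TickedBranch AP φ) (c : ℕ) :
    b.delta c = b.deltaBase (base b c) := by
  unfold TickedBranch.delta base
  exact (apply_ite b.deltaBase _ _ _).symm

lemma base_lt (b : TickedBranch AP φ) (hM : 0 < b.M) (c : ℕ) :
    base b c < b.N + b.M := by
  unfold base
  split_ifs with h
  · exact h
  · have := Nat.mod_lt (c - b.N) hM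
    omega

lemma succ_mod (a M : ℕ) (hM : 0 < M) :
    (a+1) % M = if a % M + 1 = M then 0 else a % M + 1 := by
  have h2 : a % M < M := Nat.mod_lt _ hM
  conv_lhs => rw [← Nat.mod_add_div a M]
  rw [Nat.add_right_comm, Nat.add_mul_mod_self_left]
  split_ifs with h
  · rw [h, Nat.mod_self]
  · exact Nat.mod_eq_of_lt (by omega)

lemma base_succ (b : TickedBranch AP φ) (hM : 0 < b.M) (c : ℕ) :
    base b (c+1) = if base b c + 1 = b.N + b.M then b.N else base b c + 1 := by
  unfold base
  rcases Nat.lt_trichotomy (c+1) (b.N + b.M) with h | h | h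
  · rw [if_pos h, if_pos (by omega : c < b.N + b.M), if_neg (by omega)]
  · rw [if_neg (by omega), if_pos (by omega : c < b.N + b.M), if_pos h,
      show c + 1 - b.N = b.M from by omega, Nat.mod_self]
    omega
  · rw [if_neg (by omega), if_neg (by omega : ¬ c < b.N + b.M),
      show c + 1 - b.N = (c - b.N) + 1 from by omega, succ_mod _ _ hM]
    have h2 : (c - b.N) % b.M < b.M := Nat.mod_lt _ hM
    generalize (c - b.N) % b.M = x at h2 ⊢
    split_ifs with h3 h4 <;> omega

lemma delta_succ (b : TickedBranch AP φ) (hM : 0 < b.M) (c : ℕ) :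
    b.delta (c+1) =
      b.deltaBase (if base b c + 1 = b.N + b.M then b.N else base b c + 1) := by
  rw [delta_eq, base_succ b hM c]

lemma delta_per (b : TickedBranch AP φ) (hM : 0 < b.M) {m : ℕ} (t : ℕ)
    (h1 : b.N ≤ m) (h2 : m < b.N + b.M) :
    b.delta (m + t * b.M) = b.deltaBase m := by
  rw [delta_eq]
  have hb : base b (m + t * b.M) = m := ?_
  · rw [hb]
  unfold base
  rcases Nat.eq_zero_or_pos t with rfl | ht
  · rw [if_pos (by omega)]; omega
  · have hge : b.M ≤ t * b.M := Nat.le_mul_of_pos_left _ ht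
    rw [if_neg (by omega),
      show m + t * b.M - b.N = (m - b.N) + t * b.M from by omega,
      Nat.add_mul_mod_self_right, Nat.mod_eq_of_lt (by omega)]
    omega

lemma step (b : TickedBranch AP φ) {γ δ : LTL AP} {c : ℕ}
    (h : γ.until_ δ ∈ b.delta c) :
    δ ∈ b.delta c ∨
      (γ ∈ b.delta c ∧ next (γ.until_ δ) ∈ b.delta c ∧
        γ.until_ δ ∈ b.delta (c+1)) := by
  have hM := one_le_M b
  rw [delta_eq] at h
  rcases stepb b (base_lt b hM c) h with h' | ⟨h1, h2, h3⟩
  · exact Or.inl (by rw [delta_eq]; exact h')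
  · exact Or.inr ⟨by rw [delta_eq]; exact h1, by rw [delta_eq]; exact h2,
      by rw [delta_succ b hM]; exact h3⟩

lemma run (b : TickedBranch AP φ) {γ δ : LTL AP} :
    ∀ r c, δ ∈ b.delta (c + r) → γ.until_ δ ∈ b.delta c →
      ∃ d, c ≤ d ∧ δ ∈ b.delta d ∧ ∀ f, c ≤ f → f < d →
        γ ∈ b.delta f ∧ γ.until_ δ ∈ b.delta f ∧
          next (γ.until_ δ) ∈ b.delta f := by
  intro r
  induction r with
  | zero =>
    intro c hδ hU
    rw [Nat.add_zero] at hδ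
    exact ⟨c, le_rfl, hδ, fun f h1 h2 => absurd (h1.trans_lt h2) (lt_irrefl c)⟩
  | succ r ih =>
    intro c hδ hU
    by_cases h0 : δ ∈ b.delta c
    · exact ⟨c, le_rfl, h0, fun f h1 h2 => absurd (h1.trans_lt h2) (lt_irrefl c)⟩
    · rcases step b hU with h' | ⟨h1, h2, h3⟩
      · exact absurd h' h0
      · have hδ' : δ ∈ b.delta (c + 1 + r) := by
          rwa [show c + 1 + r = c + (r+1) from by omega]
        obtain ⟨d, hd1, hd2, hd3⟩ := ih (c+1) hδ' h3
        refine ⟨d, by omega, hd2, fun f hf1 hf2 => ?_⟩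
        rcases eq_or_lt_of_le hf1 with rfl | hf
        · exact ⟨h1, hU, h2⟩
        · exact hd3 f hf hf2

lemma main (b : TickedBranch AP φ) {γ δ : LTL AP} :
    ∀ r i, (∃ t, b.N + t * b.M = i + r) → γ.until_ δ ∈ b.delta i →
      ∃ d, i ≤ d ∧ δ ∈ b.delta d ∧ ∀ f, i ≤ f → f < d →
        γ ∈ b.delta f ∧ γ.until_ δ ∈ b.delta f ∧
          next (γ.until_ δ) ∈ b.delta f := by
  have hM := one_le_M b
  intro r
  induction r with
  | zero =>
    rintro i ⟨t, ht⟩ hU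
    have hi : i = b.N + t * b.M := by omega
    have hper : b.delta i = b.deltaBase b.N := by
      rw [hi, show b.N + t * b.M = b.N + t * b.M from rfl]
      exact delta_per b hM t le_rfl (by omega)
    rcases hit b (by rw [← hper]; exact hU) with h' | ⟨m, hm1, hm2, hδ⟩
    · exact ⟨i, le_rfl, by rw [hper]; exact h',
        fun f h1 h2 => absurd (h1.trans_lt h2) (lt_irrefl i)⟩
    · have hd : δ ∈ b.delta (i + (m - b.N)) := by
        rw [show i + (m - b.N) = m + t * b.M from by omega,
          delta_per b hM t (by omega) hm2]
        exact hδ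
      exact run b (m - b.N) i hd hU
  | succ r ih =>
    rintro i ⟨t, ht⟩ hU
    by_cases h0 : δ ∈ b.delta i
    · exact ⟨i, le_rfl, h0, fun f h1 h2 => absurd (h1.trans_lt h2) (lt_irrefl i)⟩
    · rcases step b hU with h' | ⟨h1, h2, h3⟩
      · exact absurd h' h0
      · obtain ⟨d, hd1, hd2, hd3⟩ := ih (i+1) ⟨t, by omega⟩ h3
        refine ⟨d, by omega, hd2, fun f hf1 hf2 => ?_⟩
        rcases eq_or_lt_of_le hf1 with rfl | hf
        · exact ⟨h1, hU, h2⟩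
        · exact hd3 f hf hf2

end Hl3x

open LTL in
/-- Lemma hl3: in the state-label sequence `(Δ_i)` extracted
from a ticked branch of a tableau for `φ`: if `αUβ ∈ Δ_i` then there is
`d ≥ i` with `β ∈ Δ_d` and `α, αUβ, X(αUβ) ∈ Δ_f` for all `i ≤ f < d`. -/
theorem hl3 {AP : Type} [DecidableEq AP] [Countable AP] {φ : LTL AP}
    (b : TickedBranch AP φ) (α β : LTL AP) (i : ℕ)
    (h : α.until_ β ∈ b.delta i) :
    ∃ d, i ≤ d ∧ β ∈ b.delta d ∧
      ∀ f, i ≤ f → f < d →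
        α ∈ b.delta f ∧ α.until_ β ∈ b.delta f ∧
          LTL.next (α.until_ β) ∈ b.delta f := by
  have hM := Hl3x.one_le_M b
  have hle : i ≤ b.N + i * b.M := by
    have := Nat.le_mul_of_pos_right i hM
    omega
  exact Hl3x.main b (b.N + i * b.M - i) i ⟨i, by omega⟩ h
end

section
/- Lemma (hl4): in the state-label sequence (Δ_i)_{i≥0} extracted from a ticked branch b of a tableau for φ, if ¬(αUβ) ∈ Δ_i then either (1) there is some d ≥ i such that ¬α ∈ Δ_d and ¬β ∈ Δ_d and, for all f with i ≤ f < d, the three formulas ¬β, ¬(αUβ) and X¬(αUβ) all belong to Δ_f, or (2) for all d ≥ i, the three formulas ¬β, ¬(αUβ) and X¬(αUβ) all belong to Δ_d. -/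
namespace TickedBranch

open LTL

variable {AP : Type} [DecidableEq AP] {φ : LTL AP}

lemma next_static1 {Γ Γ' : Finset (LTL AP)} (h1 : Static1 Γ Γ')
    {γ : LTL AP} (h : next γ ∈ Γ) : next γ ∈ Γ' := by
  cases h1 with
  | conj α β Δ hΔ => simp_all [Finset.mem_insert]
  | negneg α Δ hΔ => simp_all [Finset.mem_insert]

lemma next_static2 {Γ Γ₁ Γ₂ : Finset (LTL AP)} (h2 : Static2 Γ Γ₁ Γ₂)
    {γ : LTL AP} (h : next γ ∈ Γ) : next γ ∈ Γ₁ ∧ next γ ∈ Γ₂ := by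
  cases h2 with
  | negconj α β Δ hΔ => simp_all [Finset.mem_insert]
  | untl α β Δ hΔ => simp_all [Finset.mem_insert]
  | neguntl α β Δ hΔ => simp_all [Finset.mem_insert]

/-- The step from node `s` to node `s+1` is a static one. -/
def StatStep (b : TickedBranch AP φ) (s : ℕ) : Prop :=
  Static1 (b.Γ s) (b.Γ (s+1)) ∨ (∃ Δ', Static2 (b.Γ s) (b.Γ (s+1)) Δ') ∨
    (∃ Δ', Static2 (b.Γ s) Δ' (b.Γ (s+1)))

lemma next_statStep {b : TickedBranch AP φ} {s : ℕ} (hs : b.StatStep s)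
    {γ : LTL AP} (h : next γ ∈ b.Γ s) : next γ ∈ b.Γ (s+1) := by
  rcases hs with h1 | ⟨Δ', h2⟩ | ⟨Δ', h2⟩
  · exact next_static1 h1 h
  · exact (next_static2 h2 h).1
  · exact (next_static2 h2 h).2

/-- One static step on a formula `¬(αUβ)`, generalized version for Static1. -/
lemma neg_until_static1 {Γ Γ' : Finset (LTL AP)} (h1 : Static1 Γ Γ')
    {α β : LTL AP} (h : neg (α.until_ β) ∈ Γ) : neg (α.until_ β) ∈ Γ' := by
  cases h1 with
  | conj α' β' Δ hΔ => simp_all [Finset.mem_insert]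
  | negneg α' Δ hΔ => simp_all [Finset.mem_insert]

/-- One static step for Static2: in each child, either the formula survives
or it has been decomposed one way or the other. -/
lemma neg_until_static2 {Γ Γ₁ Γ₂ : Finset (LTL AP)} (h2 : Static2 Γ Γ₁ Γ₂)
    {α β : LTL AP} (h : neg (α.until_ β) ∈ Γ) :
    (neg (α.until_ β) ∈ Γ₁ ∧ neg (α.until_ β) ∈ Γ₂) ∨
      ((neg α ∈ Γ₁ ∧ neg β ∈ Γ₁) ∧ (neg β ∈ Γ₂ ∧ next (neg (α.until_ β)) ∈ Γ₂)) := by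
  cases h2 with
  | negconj α' β' Δ hΔ => left; simp_all [Finset.mem_insert]
  | untl α' β' Δ hΔ => left; simp_all [Finset.mem_insert]
  | neguntl α' β' Δ hΔ =>
    rw [Finset.mem_insert] at h
    rcases h with h | h
    · obtain ⟨rfl, rfl⟩ : α' = α ∧ β' = β := by
        injection h with h'; injection h' with ha hb; exact ⟨ha.symm, hb.symm⟩
      right; simp [Finset.mem_insert]
    · left; simp [Finset.mem_insert, h]

lemma neg_until_statStep {b : TickedBranch AP φ} {s : ℕ} (hs : b.StatStep s)
    {α β : LTL AP} (h : neg (α.until_ β) ∈ b.Γ s) :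
    neg (α.until_ β) ∈ b.Γ (s+1) ∨ (neg α ∈ b.Γ (s+1) ∧ neg β ∈ b.Γ (s+1)) ∨
      (neg β ∈ b.Γ (s+1) ∧ next (neg (α.until_ β)) ∈ b.Γ (s+1)) := by
  rcases hs with h1 | ⟨Δ', h2⟩ | ⟨Δ', h2⟩
  · exact Or.inl (neg_until_static1 h1 h)
  · rcases neg_until_static2 h2 h with h' | h'
    · exact Or.inl h'.1
    · exact Or.inr (Or.inl h'.1)
  · rcases neg_until_static2 h2 h with h' | h'
    · exact Or.inl h'.2
    · exact Or.inr (Or.inr h'.2)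

end TickedBranch
namespace TickedBranch

open LTL

variable {AP : Type} [DecidableEq AP] {φ : LTL AP}

lemma next_run (b : TickedBranch AP φ) {γ : LTL AP} :
    ∀ m s, (∀ t, s ≤ t → t < s + m → b.StatStep t) → next γ ∈ b.Γ s →
      next γ ∈ b.Γ (s + m) := by
  intro m
  induction m with
  | zero => intro s _ h; exact h
  | succ m ih =>
    intro s hst h
    exact next_statStep (hst (s + m) (by omega) (by omega))
      (ih s (fun t h1 h2 => hst t h1 (by omega)) h)

lemma neg_until_run (b : TickedBranch AP φ) (α β : LTL AP) :
    ∀ m s, (∀ t, s ≤ t → t < s + m → b.StatStep t) →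
      neg (α.until_ β) ∈ b.Γ s →
      (∃ t, s ≤ t ∧ t ≤ s + m ∧ neg α ∈ b.Γ t ∧ neg β ∈ b.Γ t) ∨
      ((∃ t, s ≤ t ∧ t ≤ s + m ∧ neg β ∈ b.Γ t) ∧
        next (neg (α.until_ β)) ∈ b.Γ (s + m)) ∨
      neg (α.until_ β) ∈ b.Γ (s + m) := by
  intro m
  induction m with
  | zero => intro s _ h; exact Or.inr (Or.inr h)
  | succ m ih =>
    intro s hst h
    have hs0 : b.StatStep s := hst s (by omega) (by omega)
    have harith : s + 1 + m = s + (m + 1) := by omega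
    rcases neg_until_statStep hs0 h with h' | h' | h'
    · have := ih (s+1) (fun t h1 h2 => hst t (by omega) (by omega)) h'
      rw [harith] at this
      rcases this with ⟨t, h1, h2, h3⟩ | ⟨⟨t, h1, h2, h3⟩, h4⟩ | h4
      · exact Or.inl ⟨t, by omega, h2, h3⟩
      · exact Or.inr (Or.inl ⟨⟨t, by omega, h2, h3⟩, h4⟩)
      · exact Or.inr (Or.inr h4)
    · exact Or.inl ⟨s + 1, by omega, by omega, h'⟩
    · refine Or.inr (Or.inl ⟨⟨s + 1, by omega, by omega, h'.1⟩, ?_⟩)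
      have := b.next_run m (s+1) (fun t h1 h2 => hst t (by omega) (by omega)) h'.2
      rwa [harith] at this

end TickedBranch
namespace TickedBranch

open LTL

variable {AP : Type} [DecidableEq AP] {φ : LTL AP}

/-- Branch index at which segment `i` starts. -/
def segStart (b : TickedBranch AP φ) (i : ℕ) : ℕ :=
  if i = 0 then 0 else b.j (i - 1) + 1

/-- The reduced index: `delta i = deltaBase (red i)`. -/
def red (b : TickedBranch AP φ) (i : ℕ) : ℕ :=
  if i < b.N + b.M then i else (i - b.N) % b.M + b.N

lemma M_pos (b : TickedBranch AP φ) : 0 < b.M := by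
  unfold M
  cases hve : b.viaEmpty with
  | true => simp
  | false =>
    simp only [Bool.false_eq_true, if_false]
    have := (b.loop_end hve).1
    omega

lemma delta_eq (b : TickedBranch AP φ) (i : ℕ) :
    b.delta i = b.deltaBase (b.red i) := by
  unfold delta red
  split <;> rfl

lemma red_lt (b : TickedBranch AP φ) (i : ℕ) : b.red i < b.N + b.M := by
  unfold red
  split
  · assumption
  · have := Nat.mod_lt (i - b.N) b.M_pos
    omega

lemma red_succ (b : TickedBranch AP φ) (i : ℕ) :
    b.red (i+1) = if b.red i = b.N + b.M - 1 then b.N else b.red i + 1 := by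
  have hM := b.M_pos
  have hmod := Nat.mod_lt (i - b.N) hM
  unfold red
  by_cases h2 : i < b.N + b.M
  · rw [if_pos h2]
    by_cases h1 : i + 1 < b.N + b.M
    · rw [if_pos h1, if_neg (show ¬(i = b.N + b.M - 1) by omega)]
    · have hi : i = b.N + b.M - 1 := by omega
      rw [if_neg h1, if_pos hi]
      have h4 : i + 1 - b.N = b.M := by omega
      rw [h4, Nat.mod_self, Nat.zero_add]
  · rw [if_neg h2, if_neg (show ¬(i + 1 < b.N + b.M) by omega)]
    have h4 : i + 1 - b.N = i - b.N + 1 := by omega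
    by_cases h3 : (i - b.N) % b.M + 1 = b.M
    · rw [if_pos (show (i - b.N) % b.M + b.N = b.N + b.M - 1 by omega)]
      have hx : (i - b.N + 1) % b.M = 0 := by
        rw [← Nat.mod_add_mod, h3, Nat.mod_self]
      rw [h4, hx, Nat.zero_add]
    · rw [if_neg (show ¬((i - b.N) % b.M + b.N = b.N + b.M - 1) by omega)]
      have hx : (i - b.N + 1) % b.M = (i - b.N) % b.M + 1 := by
        rw [← Nat.mod_add_mod, Nat.mod_eq_of_lt (by omega)]
      rw [h4, hx]
      omega

lemma mem_deltaBase_seg (b : TickedBranch AP φ) {ψ : LTL AP} {i' s : ℕ}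
    (h1 : b.segStart i' ≤ s) (h2 : s ≤ b.j i') (h : ψ ∈ b.Γ s) :
    ψ ∈ b.deltaBase i' := by
  unfold deltaBase
  by_cases hN : i' = b.N
  · subst hN
    rw [if_pos rfl]
    left
    refine ⟨s, ?_, h2, h⟩
    unfold segStart at h1
    split at h1 <;> simp_all
  · rw [if_neg hN]
    by_cases h0 : i' = 0
    · subst h0
      rw [if_pos rfl]
      exact ⟨s, by omega, h2, h⟩
    · rw [if_neg h0]
      unfold segStart at h1
      rw [if_neg h0] at h1
      exact ⟨s, h1, h2, h⟩

lemma mem_deltaBase_tail (b : TickedBranch AP φ) {ψ : LTL AP} {s : ℕ}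
    (h1 : b.j (b.k - 1) + 1 ≤ s) (h2 : s ≤ b.n) (h : ψ ∈ b.Γ s) :
    ψ ∈ b.deltaBase b.N := by
  unfold deltaBase
  rw [if_pos rfl]
  exact Or.inr ⟨s, h1, h2, h⟩

lemma deltaBase_elim (b : TickedBranch AP φ) {ψ : LTL AP} {i' : ℕ}
    (h : ψ ∈ b.deltaBase i') :
    (∃ s, b.segStart i' ≤ s ∧ s ≤ b.j i' ∧ ψ ∈ b.Γ s) ∨
      (i' = b.N ∧ ∃ s, b.j (b.k - 1) + 1 ≤ s ∧ s ≤ b.n ∧ ψ ∈ b.Γ s) := by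
  unfold deltaBase at h
  by_cases hN : i' = b.N
  · subst hN
    rw [if_pos rfl] at h
    rcases h with ⟨s, hs1, hs2, hs3⟩ | h
    · left
      refine ⟨s, ?_, hs2, hs3⟩
      unfold segStart
      split at hs1 <;> simp_all
    · exact Or.inr ⟨rfl, h⟩
  · rw [if_neg hN] at h
    by_cases h0 : i' = 0
    · subst h0
      rw [if_pos rfl] at h
      obtain ⟨s, hs1, hs2, hs3⟩ := h
      exact Or.inl ⟨s, by simp [segStart], hs2, hs3⟩
    · rw [if_neg h0] at h
      obtain ⟨s, hs1, hs2, hs3⟩ := h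
      left
      exact ⟨s, by simpa [segStart, h0] using hs1, hs2, hs3⟩

lemma j_mono_le (b : TickedBranch AP φ) {a c : ℕ} (h : a ≤ c) (hc : c < b.k) :
    b.j a ≤ b.j c := by
  rcases Nat.lt_or_ge a c with h' | h'
  · exact le_of_lt (b.jmono h' hc)
  · have : a = c := by omega
    subst this; rfl

lemma stat_of (b : TickedBranch AP φ) {t : ℕ} (ht : t < b.n)
    (hnt : ∀ m, m < b.k → b.j m ≠ t) : b.StatStep t := by
  have := b.static_step t ht (by rintro ⟨m, hm, rfl⟩; exact hnt m hm rfl)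
  exact this

lemma no_trans_between (b : TickedBranch AP φ) {i' t : ℕ} (hi' : i' < b.k)
    (h1 : b.segStart i' ≤ t) (h2 : t < b.j i') :
    ∀ m, m < b.k → b.j m ≠ t := by
  intro m hm
  rcases Nat.lt_or_ge m i' with h' | h'
  · have hi0 : i' ≠ 0 := by omega
    unfold segStart at h1
    rw [if_neg hi0] at h1
    have : b.j m ≤ b.j (i' - 1) := b.j_mono_le (by omega) (by omega)
    omega
  · have : b.j i' ≤ b.j m := b.j_mono_le h' hm
    omega

/-- `¬(αUβ)` is not elementary, hence cannot be in a poised set. -/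
lemma neg_until_not_poised {Γ : Finset (LTL AP)} (hp : Poised Γ)
    {α β : LTL AP} (h : neg (α.until_ β) ∈ Γ) : False := by
  have := hp.2.2 _ h
  simp [Elementary] at this

/-- Pushing `X ψ` through a transition. -/
lemma mem_nextLabel {Γ : Finset (LTL AP)} {ψ : LTL AP} (h : next ψ ∈ Γ) :
    ψ ∈ nextLabel Γ := by
  rw [nextLabel, Finset.mem_biUnion]
  exact ⟨next ψ, h, by simp⟩

lemma push_trans (b : TickedBranch AP φ) {m : ℕ} (hm : m < b.k) {ψ : LTL AP}
    (h : next ψ ∈ b.Γ (b.j m)) : ψ ∈ b.Γ (b.j m + 1) := by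
  rw [(b.trans_step m hm).2]
  exact mem_nextLabel h

end TickedBranch
namespace TickedBranch

open LTL

variable {AP : Type} [DecidableEq AP] {φ : LTL AP}

lemma segStart_le (b : TickedBranch AP φ) {i' : ℕ} (h : i' < b.k) :
    b.segStart i' ≤ b.j i' := by
  unfold segStart
  split
  · omega
  · have := b.jmono (show i' - 1 < i' by omega) h
    omega

lemma seg_run (b : TickedBranch AP φ) (α β : LTL AP) {i' s : ℕ} (hi'k : i' < b.k)
    (h1 : b.segStart i' ≤ s) (h2 : s ≤ b.j i')
    (hmem : neg (α.until_ β) ∈ b.Γ s) :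
    (∃ t, b.segStart i' ≤ t ∧ t ≤ b.j i' ∧ neg α ∈ b.Γ t ∧ neg β ∈ b.Γ t) ∨
      ((∃ t, b.segStart i' ≤ t ∧ t ≤ b.j i' ∧ neg β ∈ b.Γ t) ∧
        next (neg (α.until_ β)) ∈ b.Γ (b.j i')) := by
  have hjn : b.j i' < b.n := b.jlt i' hi'k
  have hst : ∀ t, s ≤ t → t < s + (b.j i' - s) → b.StatStep t := by
    intro t ht1 ht2
    exact b.stat_of (by omega) (b.no_trans_between hi'k (le_trans h1 ht1) (by omega))
  have he : s + (b.j i' - s) = b.j i' := by omega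
  have := b.neg_until_run α β (b.j i' - s) s hst hmem
  rw [he] at this
  rcases this with ⟨t, ht1, ht2, ht3, ht4⟩ | ⟨⟨t, ht1, ht2, ht3⟩, hX⟩ | hbad
  · exact Or.inl ⟨t, le_trans h1 ht1, ht2, ht3, ht4⟩
  · exact Or.inr ⟨⟨t, le_trans h1 ht1, ht2, ht3⟩, hX⟩
  · exact absurd hbad (fun hb => neg_until_not_poised (b.trans_step i' hi'k).1 hb)

lemma tail_run (b : TickedBranch AP φ) (α β : LTL AP) {s : ℕ}
    (h1 : ∀ m, m < b.k → b.j m < s) (h2 : s ≤ b.n)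
    (hmem : neg (α.until_ β) ∈ b.Γ s) :
    (∃ t, s ≤ t ∧ t ≤ b.n ∧ neg α ∈ b.Γ t ∧ neg β ∈ b.Γ t) ∨
      ((∃ t, s ≤ t ∧ t ≤ b.n ∧ neg β ∈ b.Γ t) ∧
        next (neg (α.until_ β)) ∈ b.Γ b.n) ∨
      neg (α.until_ β) ∈ b.Γ b.n := by
  have hst : ∀ t, s ≤ t → t < s + (b.n - s) → b.StatStep t := by
    intro t ht1 ht2
    exact b.stat_of (by omega) (fun m hm => by have := h1 m hm; omega)
  have he : s + (b.n - s) = b.n := by omega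
  have := b.neg_until_run α β (b.n - s) s hst hmem
  rwa [he] at this

lemma mem_delta_succ (b : TickedBranch AP φ) {ψ : LTL AP} {i : ℕ}
    (hNMk : b.N + b.M = b.k) (h : ψ ∈ b.Γ (b.j (b.red i) + 1)) :
    ψ ∈ b.delta (i+1) := by
  have hM := b.M_pos
  have hlt := b.red_lt i
  rw [delta_eq, red_succ]
  by_cases hc : b.red i = b.N + b.M - 1
  · rw [if_pos hc]
    have hrk : b.red i = b.k - 1 := by omega
    refine b.mem_deltaBase_tail (by rw [hrk]) ?_ h
    have := b.jlt (b.red i) (by omega)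
    omega
  · rw [if_neg hc]
    refine b.mem_deltaBase_seg ?_ ?_ h
    · simp [segStart]
    · have := b.jmono (show b.red i < b.red i + 1 by omega) (by omega)
      omega

end TickedBranch
namespace TickedBranch

open LTL

variable {AP : Type} [DecidableEq AP] {φ : LTL AP}

lemma step_lemma (b : TickedBranch AP φ) (α β : LTL AP) (i : ℕ)
    (h : neg (α.until_ β) ∈ b.delta i) :
    (neg α ∈ b.delta i ∧ neg β ∈ b.delta i) ∨
      (neg β ∈ b.delta i ∧ next (neg (α.until_ β)) ∈ b.delta i ∧
        neg (α.until_ β) ∈ b.delta (i+1)) := by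
  have hM := b.M_pos
  have hlt := b.red_lt i
  rw [delta_eq] at h
  cases hve : b.viaEmpty with
  | true =>
    have hNv : b.N = b.k - 1 := by simp [N, hve]
    have hMv : b.M = 1 := by simp [M, hve]
    have hΓn : b.Γ b.n = ∅ := b.empty_end hve
    have tailcase : ∀ s, (∀ m, m < b.k → b.j m < s) → s ≤ b.n →
        neg (α.until_ β) ∈ b.Γ s →
        ∃ t, s ≤ t ∧ t ≤ b.n ∧ neg α ∈ b.Γ t ∧ neg β ∈ b.Γ t := by
      intro s hs1 hs2 hs3
      rcases b.tail_run α β hs1 hs2 hs3 with h' | ⟨_, h'⟩ | h'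
      · exact h'
      · rw [hΓn] at h'; simp at h'
      · rw [hΓn] at h'; simp at h'
    by_cases hk : b.k = 0
    · have hj0 : b.j 0 = b.n := by have := b.jk hve; rwa [hk] at this
      rcases b.deltaBase_elim h with ⟨s, hs1, hs2, hs3⟩ | ⟨hiN, s, hs1, hs2, hs3⟩
      · have hi0 : b.red i = 0 := by omega
        rw [hi0, hj0] at hs2
        obtain ⟨t, ht1, ht2, ht3, ht4⟩ :=
          tailcase s (fun m hm => by omega) hs2 hs3
        left
        constructor <;> rw [delta_eq, hi0]
        · exact b.mem_deltaBase_seg (by simp [segStart]) (by omega) ht3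
        · exact b.mem_deltaBase_seg (by simp [segStart]) (by omega) ht4
      · rw [hk] at hs1
        simp only [Nat.zero_sub] at hs1
        omega
    · have hk1 : b.k - 1 < b.k := by omega
      have hjk1n : b.j (b.k - 1) < b.n := b.jlt _ hk1
      rcases b.deltaBase_elim h with ⟨s, hs1, hs2, hs3⟩ | ⟨hiN, s, hs1, hs2, hs3⟩
      · have hi'k : b.red i < b.k := by omega
        rcases b.seg_run α β hi'k hs1 hs2 hs3 with
          ⟨t, ht1, ht2, ht3, ht4⟩ | ⟨⟨t, ht1, ht2, ht3⟩, hX⟩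
        · left
          exact ⟨(by rw [delta_eq]; exact b.mem_deltaBase_seg ht1 ht2 ht3),
            (by rw [delta_eq]; exact b.mem_deltaBase_seg ht1 ht2 ht4)⟩
        · by_cases hiN : b.red i = b.N
          · have hpush : neg (α.until_ β) ∈ b.Γ (b.j (b.red i) + 1) :=
              b.push_trans hi'k hX
            obtain ⟨t', ht1', ht2', ht3', ht4'⟩ :=
              tailcase (b.j (b.red i) + 1)
                (fun m hm => by
                  have := b.j_mono_le (show m ≤ b.red i by omega) hi'k
                  omega)
                (by rw [hiN, hNv]; omega) hpush
            left
            constructor <;> rw [delta_eq, hiN]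
            · exact b.mem_deltaBase_tail (by rw [← hNv, ← hiN]; omega) ht2' ht3'
            · exact b.mem_deltaBase_tail (by rw [← hNv, ← hiN]; omega) ht2' ht4'
          · right
            refine ⟨(by rw [delta_eq]; exact b.mem_deltaBase_seg ht1 ht2 ht3),
              (by rw [delta_eq]
                  exact b.mem_deltaBase_seg (le_trans hs1 hs2) le_rfl hX),
              b.mem_delta_succ (by omega) (b.push_trans hi'k hX)⟩
      · obtain ⟨t, ht1, ht2, ht3, ht4⟩ :=
          tailcase s
            (fun m hm => by
              have := b.j_mono_le (show m ≤ b.k - 1 by omega) hk1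
              omega)
            hs2 hs3
        left
        constructor <;> rw [delta_eq, hiN]
        · exact b.mem_deltaBase_tail (by omega) ht2 ht3
        · exact b.mem_deltaBase_tail (by omega) ht2 ht4
  | false =>
    obtain ⟨hlk, hpn, hsub, _⟩ := b.loop_end hve
    have hNv : b.N = b.l := by simp [N, hve]
    have hMv : b.M = b.k - b.l := by simp [M, hve]
    have hNMk : b.N + b.M = b.k := by omega
    have hk1 : b.k - 1 < b.k := by omega
    have hjk1n : b.j (b.k - 1) < b.n := b.jlt _ hk1
    have hNk : b.N < b.k := by omega
    rcases b.deltaBase_elim h with ⟨s, hs1, hs2, hs3⟩ | ⟨hiN, s, hs1, hs2, hs3⟩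
    · have hi'k : b.red i < b.k := by omega
      rcases b.seg_run α β hi'k hs1 hs2 hs3 with
        ⟨t, ht1, ht2, ht3, ht4⟩ | ⟨⟨t, ht1, ht2, ht3⟩, hX⟩
      · left
        exact ⟨(by rw [delta_eq]; exact b.mem_deltaBase_seg ht1 ht2 ht3),
          (by rw [delta_eq]; exact b.mem_deltaBase_seg ht1 ht2 ht4)⟩
      · right
        refine ⟨(by rw [delta_eq]; exact b.mem_deltaBase_seg ht1 ht2 ht3),
          (by rw [delta_eq]
              exact b.mem_deltaBase_seg (le_trans hs1 hs2) le_rfl hX),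
          b.mem_delta_succ hNMk (b.push_trans hi'k hX)⟩
    · rcases b.tail_run α β
          (fun m hm => by
            have := b.j_mono_le (show m ≤ b.k - 1 by omega) hk1
            omega)
          hs2 hs3 with
        ⟨t, ht1, ht2, ht3, ht4⟩ | ⟨⟨t, ht1, ht2, ht3⟩, hX⟩ | hbad
      · left
        constructor <;> rw [delta_eq, hiN]
        · exact b.mem_deltaBase_tail (by omega) ht2 ht3
        · exact b.mem_deltaBase_tail (by omega) ht2 ht4
      · have hXl : next (neg (α.until_ β)) ∈ b.Γ (b.j b.N) := by
          rw [hNv]; exact hsub hX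
        right
        refine ⟨(by rw [delta_eq, hiN]; exact b.mem_deltaBase_tail (by omega) ht2 ht3),
          (by rw [delta_eq, hiN]; exact b.mem_deltaBase_seg (b.segStart_le hNk) le_rfl hXl),
          ?_⟩
        apply b.mem_delta_succ hNMk
        rw [hiN]
        exact b.push_trans hNk hXl
      · exact absurd hbad (fun hb => neg_until_not_poised hpn hb)

end TickedBranch
open LTL in
/-- Lemma hl4: in the state-label sequence `(Δ_i)` extracted
from a ticked branch of a tableau for `φ`: if `¬(αUβ) ∈ Δ_i` then either
(1) there is `d ≥ i` with `¬α, ¬β ∈ Δ_d` and `¬β, ¬(αUβ), X¬(αUβ) ∈ Δ_f` for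
all `i ≤ f < d`, or (2) `¬β, ¬(αUβ), X¬(αUβ) ∈ Δ_d` for all `d ≥ i`. -/
theorem hl4 {AP : Type} [DecidableEq AP] [Countable AP] {φ : LTL AP}
    (b : TickedBranch AP φ) (α β : LTL AP) (i : ℕ)
    (h : LTL.neg (α.until_ β) ∈ b.delta i) :
    (∃ d, i ≤ d ∧ LTL.neg α ∈ b.delta d ∧ LTL.neg β ∈ b.delta d ∧
        ∀ f, i ≤ f → f < d →
          LTL.neg β ∈ b.delta f ∧ LTL.neg (α.until_ β) ∈ b.delta f ∧
            LTL.next (LTL.neg (α.until_ β)) ∈ b.delta f) ∨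
    (∀ d, i ≤ d →
        LTL.neg β ∈ b.delta d ∧ LTL.neg (α.until_ β) ∈ b.delta d ∧
          LTL.next (LTL.neg (α.until_ β)) ∈ b.delta d) := by
  rcases Classical.em (∃ d, i ≤ d ∧ LTL.neg α ∈ b.delta d ∧ LTL.neg β ∈ b.delta d ∧
      ∀ f, i ≤ f → f < d →
        LTL.neg β ∈ b.delta f ∧ LTL.neg (α.until_ β) ∈ b.delta f ∧
          LTL.next (LTL.neg (α.until_ β)) ∈ b.delta f) with h1 | h1
  · exact Or.inl h1
  · right
    have hleft : ∀ m, (∀ f, i ≤ f → f < i + m →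
        LTL.neg β ∈ b.delta f ∧ LTL.neg (α.until_ β) ∈ b.delta f ∧
          LTL.next (LTL.neg (α.until_ β)) ∈ b.delta f) ∧
        LTL.neg (α.until_ β) ∈ b.delta (i + m) := by
      intro m
      induction m with
      | zero => exact ⟨fun f hf1 hf2 => absurd hf2 (by omega), h⟩
      | succ m ih =>
        obtain ⟨ihP, ihmem⟩ := ih
        rcases b.step_lemma α β (i+m) ihmem with ⟨hA1, hA2⟩ | ⟨hB1, hB2, hB3⟩
        · exact absurd ⟨i+m, by omega, hA1, hA2,
            fun f hf1 hf2 => ihP f hf1 (by omega)⟩ h1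
        · refine ⟨fun f hf1 hf2 => ?_, hB3⟩
          rcases Nat.lt_or_ge f (i+m) with hf | hf
          · exact ihP f hf1 hf
          · have hfeq : f = i + m := by omega
            subst hfeq
            exact ⟨hB1, ihmem, hB2⟩
    intro d hd
    exact (hleft (d - i + 1)).1 d hd (by omega)
end

section
/- Truth lemma: let (Δ_i)_{i≥0} be the state-label sequence extracted from a ticked branch b of a tableau for φ, and define the ω-word w : ℕ → Set AP by w(i) = {p ∈ AP : p ∈ Δ_i}. Then for every formula α and every i ≥ 0, if α ∈ Δ_i then w_{≥i} ⊨ α. In particular, since φ ∈ Δ_0, w ⊨ φ. -/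
set_option linter.unusedSectionVars false

namespace TruthAux

open LTL

variable {AP : Type} [DecidableEq AP]

/-- The result of decomposing a formula by a static rule, expressed via a
membership predicate `P` on the child label. -/
def Res (P : LTL AP → Prop) : LTL AP → Prop
  | .and γ δ => P γ ∧ P δ
  | .neg (.neg γ) => P γ
  | .neg (.and γ δ) => P (.neg γ) ∨ P (.neg δ)
  | .until_ γ δ => P δ ∨ (P γ ∧ P (.next (γ.until_ δ)))
  | .neg (.until_ γ δ) =>
      (P (.neg γ) ∧ P (.neg δ)) ∨ (P (.neg δ) ∧ P (.next (.neg (γ.until_ δ))))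
  | _ => False

lemma Res.mono {P Q : LTL AP → Prop} (h : ∀ χ, P χ → Q χ) :
    ∀ {ψ}, Res P ψ → Res Q ψ := by
  intro ψ hψ
  cases ψ with
  | atom p => simp [Res] at hψ
  | and γ δ => exact ⟨h _ hψ.1, h _ hψ.2⟩
  | next γ => simp [Res] at hψ
  | until_ γ δ => exact hψ.imp (h _) fun ⟨a, c⟩ => ⟨h _ a, h _ c⟩
  | neg γ =>
    cases γ with
    | atom p => simp [Res] at hψ
    | neg γ => exact h _ hψ
    | and γ δ => exact hψ.imp (h _) (h _)
    | next γ => simp [Res] at hψ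
    | until_ γ δ =>
      exact hψ.imp (fun ⟨a, c⟩ => ⟨h _ a, h _ c⟩) fun ⟨a, c⟩ => ⟨h _ a, h _ c⟩

lemma not_res_of_elem {P : LTL AP → Prop} :
    ∀ {ψ : LTL AP}, Elementary ψ → ¬ Res P ψ := by
  intro ψ hel hres
  cases ψ with
  | atom p => simp [Res] at hres
  | and γ δ => simp [Elementary] at hel
  | next γ => simp [Res] at hres
  | until_ γ δ => simp [Elementary] at hel
  | neg γ =>
    cases γ with
    | atom p => simp [Res] at hres
    | neg γ => simp [Elementary] at hel
    | and γ δ => simp [Elementary] at hel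
    | next γ => simp [Res] at hres
    | until_ γ δ => simp [Elementary] at hel

/-- Shape of one allowed static step of a branch. -/
def StepOK (Γ Γ' : Finset (LTL AP)) : Prop :=
  Static1 Γ Γ' ∨ (∃ Δ', Static2 Γ Γ' Δ') ∨ (∃ Δ', Static2 Γ Δ' Γ')

lemma step_mem {Γ Γ' : Finset (LTL AP)} (h : StepOK Γ Γ') {ψ} (hψ : ψ ∈ Γ) :
    ψ ∈ Γ' ∨ Res (· ∈ Γ') ψ := by
  rcases h with h | ⟨Δ', h⟩ | ⟨Δ', h⟩
  · cases h with
    | conj α β Δ hn =>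
      rcases Finset.mem_insert.1 hψ with rfl | hψ
      · exact Or.inr ⟨by simp, by simp⟩
      · exact Or.inl (by simp [hψ])
    | negneg α Δ hn =>
      rcases Finset.mem_insert.1 hψ with rfl | hψ
      · exact Or.inr (by simp [Res])
      · exact Or.inl (by simp [hψ])
  · cases h with
    | negconj α β Δ hn =>
      rcases Finset.mem_insert.1 hψ with rfl | hψ
      · exact Or.inr (Or.inl (by simp))
      · exact Or.inl (by simp [hψ])
    | untl α β Δ hn =>
      rcases Finset.mem_insert.1 hψ with rfl | hψ
      · exact Or.inr (Or.inl (by simp))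
      · exact Or.inl (by simp [hψ])
    | neguntl α β Δ hn =>
      rcases Finset.mem_insert.1 hψ with rfl | hψ
      · exact Or.inr (Or.inl ⟨by simp, by simp⟩)
      · exact Or.inl (by simp [hψ])
  · cases h with
    | negconj α β Δ hn =>
      rcases Finset.mem_insert.1 hψ with rfl | hψ
      · exact Or.inr (Or.inr (by simp))
      · exact Or.inl (by simp [hψ])
    | untl α β Δ hn =>
      rcases Finset.mem_insert.1 hψ with rfl | hψ
      · exact Or.inr (Or.inr ⟨by simp, by simp⟩)
      · exact Or.inl (by simp [hψ])
    | neguntl α β Δ hn =>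
      rcases Finset.mem_insert.1 hψ with rfl | hψ
      · exact Or.inr (Or.inr ⟨by simp, by simp⟩)
      · exact Or.inl (by simp [hψ])

/-- Running static steps from `s` to `e`: an initial formula either is
elementary and persists to the end, or gets decomposed somewhere. -/
lemma run' {Γ : ℕ → Finset (LTL AP)} {e : ℕ}
    (hel : ∀ χ ∈ Γ e, Elementary χ) :
    ∀ d s, s + d = e →
    (∀ t, s ≤ t → t < e → StepOK (Γ t) (Γ (t + 1))) →
    ∀ {ψ}, ψ ∈ Γ s →
      (Elementary ψ ∧ ψ ∈ Γ e) ∨ ∃ t, s < t ∧ t ≤ e ∧ Res (· ∈ Γ t) ψ := by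
  intro d
  induction d with
  | zero =>
    intro s hs _ ψ hψ
    simp only [Nat.add_zero] at hs
    subst hs
    exact Or.inl ⟨hel ψ hψ, hψ⟩
  | succ d ih =>
    intro s hs hst ψ hψ
    have hse : s < e := by omega
    rcases step_mem (hst s le_rfl hse) hψ with h | h
    · rcases ih (s + 1) (by omega) (fun t ht1 ht2 => hst t (by omega) ht2) h with
        h | ⟨t, ht1, ht2, ht3⟩
      · exact Or.inl h
      · exact Or.inr ⟨t, by omega, ht2, ht3⟩
    · exact Or.inr ⟨s + 1, by omega, by omega, h⟩

section BranchLemmas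

variable {φ : LTL AP}

/-- Start of the `i`-th segment. -/
def st (b : TickedBranch AP φ) (i : ℕ) : ℕ :=
  if i = 0 then 0 else b.j (i - 1) + 1

/-- Index into `deltaBase` corresponding to `delta i`. -/
def idx (b : TickedBranch AP φ) (i : ℕ) : ℕ :=
  if i < b.N + b.M then i else (i - b.N) % b.M + b.N

lemma M_pos (b : TickedBranch AP φ) : 0 < b.M := by
  unfold TickedBranch.M
  split
  · exact one_pos
  · next h =>
    have := (b.loop_end (by simpa using h)).1
    omega

lemma N_lt (b : TickedBranch AP φ) : b.N < b.N + b.M :=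
  Nat.lt_add_of_pos_right (M_pos b)

lemma hcase (b : TickedBranch AP φ) {i : ℕ} (hi : i < b.N + b.M) :
    i < b.k ∨ (b.viaEmpty = true ∧ b.k = 0 ∧ i = 0) := by
  unfold TickedBranch.N TickedBranch.M at hi
  by_cases h : b.viaEmpty = true
  · rw [if_pos h, if_pos h] at hi
    rcases Nat.eq_zero_or_pos b.k with hk | hk
    · exact Or.inr ⟨h, hk, by omega⟩
    · exact Or.inl (by omega)
  · rw [if_neg h, if_neg h] at hi
    have hl := (b.loop_end (by simpa using h)).1
    exact Or.inl (by omega)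

lemma NMk (b : TickedBranch AP φ) (hk : 0 < b.k) : b.N + b.M = b.k := by
  unfold TickedBranch.N TickedBranch.M
  by_cases h : b.viaEmpty = true
  · rw [if_pos h, if_pos h]; omega
  · rw [if_neg h, if_neg h]
    have hl := (b.loop_end (by simpa using h)).1
    omega

lemma jmono' (b : TickedBranch AP φ) {a c : ℕ} (hac : a ≤ c) (hc : c < b.k) :
    b.j a ≤ b.j c := by
  rcases eq_or_lt_of_le hac with rfl | h
  · exact le_rfl
  · exact (b.jmono h hc).le

lemma j_le_n (b : TickedBranch AP φ) {i} (hi : i < b.N + b.M) : b.j i ≤ b.n := by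
  rcases hcase b hi with h | ⟨he, hk, rfl⟩
  · exact (b.jlt i h).le
  · have hj := b.jk he
    rw [hk] at hj
    exact le_of_eq hj

lemma poised_or_empty (b : TickedBranch AP φ) {i} (hi : i < b.N + b.M) :
    Poised (b.Γ (b.j i)) ∨ b.Γ (b.j i) = ∅ := by
  rcases hcase b hi with h | ⟨he, hk, rfl⟩
  · exact Or.inl (b.trans_step i h).1
  · right
    have hj := b.jk he
    rw [hk] at hj
    rw [hj]
    exact b.empty_end he

lemma allElem_end (b : TickedBranch AP φ) {i} (hi : i < b.N + b.M) :
    ∀ χ ∈ b.Γ (b.j i), Elementary χ := by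
  rcases poised_or_empty b hi with h | h
  · exact h.2.2
  · rw [h]; intro χ hχ; exact absurd hχ (Finset.notMem_empty χ)

lemma st_le_j (b : TickedBranch AP φ) {i} (hi : i < b.N + b.M) : st b i ≤ b.j i := by
  unfold st
  split
  · exact Nat.zero_le _
  · next h =>
    have hik : i < b.k := by
      rcases hcase b hi with h' | ⟨_, _, h0⟩
      · exact h'
      · exact absurd h0 h
    have := b.jmono (a := i - 1) (b := i) (by omega) hik
    omega

lemma not_trans_main (b : TickedBranch AP φ) {i t} (hi : i < b.N + b.M)
    (h1 : st b i ≤ t) (h2 : t < b.j i) : ¬ ∃ a < b.k, b.j a = t := by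
  rintro ⟨a, hak, rfl⟩
  unfold st at h1
  split at h1
  · next h0 =>
    subst h0
    have : b.j 0 ≤ b.j a := jmono' b (Nat.zero_le a) hak
    omega
  · next h0 =>
    have hik : i < b.k := by
      rcases hcase b hi with h' | ⟨_, _, hh⟩
      · exact h'
      · exact absurd hh h0
    rcases Nat.lt_or_ge a i with h' | h'
    · have : b.j a ≤ b.j (i - 1) := jmono' b (by omega) (by omega)
      omega
    · have : b.j i ≤ b.j a := jmono' b h' hak
      omega

lemma statics_main (b : TickedBranch AP φ) {i} (hi : i < b.N + b.M) :
    ∀ t, st b i ≤ t → t < b.j i → StepOK (b.Γ t) (b.Γ (t + 1)) := by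
  intro t h1 h2
  have htn : t < b.n := lt_of_lt_of_le h2 (j_le_n b hi)
  exact b.static_step t htn (not_trans_main b hi h1 h2)

lemma gamma_n_elem (b : TickedBranch AP φ) : ∀ χ ∈ b.Γ b.n, Elementary χ := by
  by_cases h : b.viaEmpty = true
  · rw [b.empty_end h]; intro χ hχ; exact absurd hχ (Finset.notMem_empty χ)
  · exact (b.loop_end (by simpa using h)).2.1.2.2

lemma statics_tail (b : TickedBranch AP φ) (hk : 0 < b.k) :
    ∀ t, b.j (b.k - 1) + 1 ≤ t → t < b.n → StepOK (b.Γ t) (b.Γ (t + 1)) := by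
  intro t h1 h2
  refine b.static_step t h2 ?_
  rintro ⟨a, hak, rfl⟩
  have : b.j a ≤ b.j (b.k - 1) := jmono' b (by omega) (by omega)
  omega

lemma gamma_n_sub (b : TickedBranch AP φ) (h : b.viaEmpty = false) :
    b.Γ b.n ⊆ b.Γ (b.j b.N) := by
  have hN : b.N = b.l := by simp [TickedBranch.N, h]
  rw [hN]
  exact (b.loop_end h).2.2.1

lemma deltaBase_eq (b : TickedBranch AP φ) {i} (h : i ≠ b.N) :
    b.deltaBase i = seg b.Γ (st b i) (b.j i) := by
  unfold TickedBranch.deltaBase st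
  rw [if_neg h]
  by_cases h0 : i = 0
  · subst h0; rw [if_pos rfl, if_pos rfl]
  · rw [if_neg h0, if_neg h0]

lemma deltaBase_N (b : TickedBranch AP φ) :
    b.deltaBase b.N =
      seg b.Γ (st b b.N) (b.j b.N) ∪ seg b.Γ (b.j (b.k - 1) + 1) b.n := by
  unfold TickedBranch.deltaBase st
  rw [if_pos rfl]

lemma seg_sub_deltaBase (b : TickedBranch AP φ) {i} :
    seg b.Γ (st b i) (b.j i) ⊆ b.deltaBase i := by
  by_cases h : i = b.N
  · subst h; rw [deltaBase_N b]; exact Set.subset_union_left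
  · rw [deltaBase_eq b h]

lemma mem_seg {Γ : ℕ → Finset (LTL AP)} {a e s : ℕ} (h1 : a ≤ s) (h2 : s ≤ e)
    {ψ} (h : ψ ∈ Γ s) : ψ ∈ seg Γ a e := ⟨s, h1, h2, h⟩

lemma elem_end (b : TickedBranch AP φ) {i} (hi : i < b.N + b.M) {ψ}
    (hel : Elementary ψ) (hψ : ψ ∈ b.deltaBase i) : ψ ∈ b.Γ (b.j i) := by
  have main : ∀ s, st b i ≤ s → s ≤ b.j i → ψ ∈ b.Γ s → ψ ∈ b.Γ (b.j i) := by
    intro s h1 h2 hs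
    rcases run' (allElem_end b hi) (b.j i - s) s (by omega)
      (fun t ht1 ht2 => statics_main b hi t (le_trans h1 ht1) ht2) hs with
      h | ⟨t, _, _, hres⟩
    · exact h.2
    · exact absurd hres (not_res_of_elem hel)
  by_cases hN : i = b.N
  · subst hN
    rw [deltaBase_N b] at hψ
    rcases hψ with h | h
    · obtain ⟨s, h1, h2, hs⟩ := h
      exact main s h1 h2 hs
    · obtain ⟨s, h1, h2, hs⟩ := h
      rcases Nat.eq_zero_or_pos b.k with hk | hk
      · exfalso
        have he : b.viaEmpty = true := by
          by_contra h'
          have := (b.loop_end (by simpa using h')).1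
          omega
        have hj := b.jk he
        rw [hk] at hj h1
        have h01 : (0 : ℕ) - 1 = 0 := rfl
        rw [h01] at h1
        omega
      · have hmem : ψ ∈ b.Γ b.n := by
          rcases run' (gamma_n_elem b) (b.n - s) s (by omega)
            (fun t ht1 ht2 => statics_tail b hk t (le_trans h1 ht1) ht2) hs with
            h | ⟨t, _, _, hres⟩
          · exact h.2
          · exact absurd hres (not_res_of_elem hel)
        by_cases he : b.viaEmpty = true
        · rw [b.empty_end he] at hmem
          exact absurd hmem (Finset.notMem_empty ψ)
        · exact gamma_n_sub b (by simpa using he) hmem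
  · rw [deltaBase_eq b hN] at hψ
    obtain ⟨s, h1, h2, hs⟩ := hψ
    exact main s h1 h2 hs

lemma idx_lt (b : TickedBranch AP φ) (i : ℕ) : idx b i < b.N + b.M := by
  unfold idx
  split
  · assumption
  · have := Nat.mod_lt (i - b.N) (M_pos b)
    omega

lemma delta_eq (b : TickedBranch AP φ) (i : ℕ) :
    b.delta i = b.deltaBase (idx b i) := by
  unfold TickedBranch.delta idx
  split <;> rfl

lemma idx_zero (b : TickedBranch AP φ) : idx b 0 = 0 := by
  unfold idx
  rw [if_pos (by have := M_pos b; omega)]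

lemma succ_mod {M : ℕ} (hM : 0 < M) (a : ℕ) :
    (a + 1) % M = if a % M + 1 = M then 0 else a % M + 1 := by
  rcases Nat.lt_or_ge M 2 with h2 | h2
  · have hM1 : M = 1 := by omega
    subst hM1
    simp [Nat.mod_one]
  · have h1 : (a + 1) % M = (a % M + 1) % M := by
      rw [Nat.add_mod, Nat.mod_eq_of_lt (by omega : 1 < M)]
    rw [h1]
    split
    · next h => rw [h, Nat.mod_self]
    · next h =>
      exact Nat.mod_eq_of_lt (by have := Nat.mod_lt a hM; omega)

lemma idx_succ (b : TickedBranch AP φ) (i : ℕ) :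
    idx b (i + 1) = if idx b i + 1 = b.N + b.M then b.N else idx b i + 1 := by
  have hM := M_pos b
  unfold idx
  by_cases h1 : i + 1 < b.N + b.M
  · have hi : i < b.N + b.M := by omega
    rw [if_pos h1, if_pos hi, if_neg (by omega : ¬(i + 1 = b.N + b.M))]
  · by_cases h2 : i < b.N + b.M
    · rw [if_neg h1, if_pos h2, if_pos (by omega : i + 1 = b.N + b.M)]
      have he : i + 1 - b.N = b.M := by omega
      rw [he, Nat.mod_self]
      omega
    · rw [if_neg h1, if_neg h2]
      have hiN : b.N ≤ i := by omega
      have hstep : i + 1 - b.N = (i - b.N) + 1 := by omega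
      rw [hstep, succ_mod hM]
      have hmod := Nat.mod_lt (i - b.N) hM
      by_cases h3 : (i - b.N) % b.M + 1 = b.M
      · rw [if_pos h3, if_pos (by omega : (i - b.N) % b.M + b.N + 1 = b.N + b.M)]
        omega
      · rw [if_neg h3, if_neg (by omega : ¬((i - b.N) % b.M + b.N + 1 = b.N + b.M))]
        omega

lemma delta_of_base (b : TickedBranch AP φ) {m} (hm1 : b.N ≤ m)
    (hm2 : m < b.N + b.M) (t : ℕ) :
    b.delta (m + t * b.M) = b.deltaBase m := by
  rw [delta_eq]
  unfold idx
  split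
  · next h =>
    rcases Nat.eq_zero_or_pos t with rfl | ht
    · simp
    · exfalso
      have hmul : b.M ≤ t * b.M := Nat.le_mul_of_pos_left _ ht
      have : b.N + b.M ≤ m + t * b.M := add_le_add hm1 hmul
      exact absurd h (not_lt.2 this)
  · next h =>
    have h1 : ∀ q, m + q - b.N = (m - b.N) + q := fun q => by omega
    rw [h1 (t * b.M), Nat.add_mul_mod_self_right,
      Nat.mod_eq_of_lt (by omega : m - b.N < b.M), Nat.sub_add_cancel hm1]

end BranchLemmas

section DeltaLemmas

variable {φ : LTL AP}

lemma delta_consistent (b : TickedBranch AP φ) (i : ℕ) {p : AP}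
    (h1 : LTL.atom p ∈ b.delta i) (h2 : LTL.neg (LTL.atom p) ∈ b.delta i) :
    False := by
  rw [delta_eq] at h1 h2
  have hi := idx_lt b i
  have e1 := elem_end b hi (by trivial) h1
  have e2 := elem_end b hi (by trivial) h2
  rcases poised_or_empty b hi with hp | hp
  · exact hp.2.1 (LTL.atom p) ⟨e1, e2⟩
  · rw [hp] at e1
    exact absurd e1 (Finset.notMem_empty _)

lemma mem_nextLabel_next {Γ : Finset (LTL AP)} {γ} (h : LTL.next γ ∈ Γ) :
    γ ∈ nextLabel Γ := by
  unfold nextLabel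
  exact Finset.mem_biUnion.2 ⟨_, h, by simp⟩

lemma mem_nextLabel_negnext {Γ : Finset (LTL AP)} {γ}
    (h : LTL.neg (LTL.next γ) ∈ Γ) : LTL.neg γ ∈ nextLabel Γ := by
  unfold nextLabel
  exact Finset.mem_biUnion.2 ⟨_, h, by simp⟩

lemma delta_next_gen (b : TickedBranch AP φ) (i : ℕ) {ψ γ' : LTL AP}
    (hel : Elementary ψ)
    (hnl : ∀ Γ : Finset (LTL AP), ψ ∈ Γ → γ' ∈ nextLabel Γ)
    (h : ψ ∈ b.delta i) : γ' ∈ b.delta (i + 1) := by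
  rw [delta_eq] at h
  obtain ⟨m, hm⟩ : ∃ m, idx b i = m := ⟨_, rfl⟩
  rw [hm] at h
  have hmlt : m < b.N + b.M := hm ▸ idx_lt b i
  have hend := elem_end b hmlt hel h
  rcases hcase b hmlt with hmk | ⟨he, hk0, hm0⟩
  · have htr := b.trans_step m hmk
    have hγ' : γ' ∈ b.Γ (b.j m + 1) := by
      rw [htr.2]
      exact hnl _ hend
    rw [delta_eq, idx_succ, hm]
    by_cases hw : m + 1 = b.N + b.M
    · rw [if_pos hw]
      have hkpos : 0 < b.k := by omega
      have hNMk := NMk b hkpos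
      have hmk1 : m = b.k - 1 := by omega
      rw [deltaBase_N b]
      refine Set.mem_union_right _ (mem_seg ?_ ?_ hγ')
      · rw [hmk1]
      · have := b.jlt m hmk
        omega
    · rw [if_neg hw]
      have hm1 : m + 1 < b.N + b.M := by omega
      have hm1k : m + 1 < b.k := by
        rcases hcase b hm1 with h' | ⟨_, _, hh⟩
        · exact h'
        · omega
      refine seg_sub_deltaBase b (mem_seg ?_ ?_ hγ')
      · unfold st
        rw [if_neg (by omega : ¬ m + 1 = 0)]
        simp
      · have := b.jmono (a := m) (b := m + 1) (by omega) hm1k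
        omega
  · subst hm0
    have hj := b.jk he
    rw [hk0] at hj
    rw [hj, b.empty_end he] at hend
    exact absurd hend (Finset.notMem_empty _)

lemma delta_next (b : TickedBranch AP φ) (i : ℕ) {γ}
    (h : LTL.next γ ∈ b.delta i) : γ ∈ b.delta (i + 1) :=
  delta_next_gen b i (by trivial) (fun _ hΓ => mem_nextLabel_next hΓ) h

lemma delta_neg_next (b : TickedBranch AP φ) (i : ℕ) {γ}
    (h : LTL.neg (LTL.next γ) ∈ b.delta i) : LTL.neg γ ∈ b.delta (i + 1) :=
  delta_next_gen b i (by trivial) (fun _ hΓ => mem_nextLabel_negnext hΓ) h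

lemma delta_res (b : TickedBranch AP φ) (i : ℕ) {ψ} (h : ψ ∈ b.delta i) :
    Elementary ψ ∨ Res (· ∈ b.delta i) ψ := by
  rw [delta_eq] at h
  obtain ⟨m, hm⟩ : ∃ m, idx b i = m := ⟨_, rfl⟩
  rw [hm] at h
  have hmlt : m < b.N + b.M := hm ▸ idx_lt b i
  have hsub : b.deltaBase m ⊆ b.delta i := by
    rw [delta_eq, hm]
  have main : ∀ s, st b m ≤ s → s ≤ b.j m → ψ ∈ b.Γ s →
      Elementary ψ ∨ Res (· ∈ b.delta i) ψ := by
    intro s h1 h2 hs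
    rcases run' (allElem_end b hmlt) (b.j m - s) s (by omega)
      (fun t ht1 ht2 => statics_main b hmlt t (le_trans h1 ht1) ht2) hs with
      hres | ⟨t, ht1, ht2, hres⟩
    · exact Or.inl hres.1
    · refine Or.inr (Res.mono (fun χ hχ => hsub ?_) hres)
      exact seg_sub_deltaBase b (mem_seg (le_trans h1 (le_of_lt ht1)) ht2 hχ)
  by_cases hN : m = b.N
  · subst hN
    rw [deltaBase_N b] at h
    rcases h with h | h
    · obtain ⟨s, h1, h2, hs⟩ := h
      exact main s h1 h2 hs
    · obtain ⟨s, h1, h2, hs⟩ := h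
      rcases Nat.eq_zero_or_pos b.k with hk | hk
      · exfalso
        have he : b.viaEmpty = true := by
          by_contra h'
          have := (b.loop_end (by simpa using h')).1
          omega
        have hj := b.jk he
        rw [hk] at hj h1
        have h01 : (0 : ℕ) - 1 = 0 := rfl
        rw [h01] at h1
        omega
      · rcases run' (gamma_n_elem b) (b.n - s) s (by omega)
          (fun t ht1 ht2 => statics_tail b hk t (le_trans h1 ht1) ht2) hs with
          hres | ⟨t, ht1, ht2, hres⟩
        · exact Or.inl hres.1
        · refine Or.inr (Res.mono (fun χ hχ => hsub ?_) hres)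
          rw [deltaBase_N b]
          exact Set.mem_union_right _
            (mem_seg (le_trans h1 (le_of_lt ht1)) ht2 hχ)
  · rw [deltaBase_eq b hN] at h
    obtain ⟨s, h1, h2, hs⟩ := h
    exact main s h1 h2 hs

lemma fulfill (b : TickedBranch AP φ) {γ δ : LTL AP}
    (h : LTL.next (γ.until_ δ) ∈ b.Γ (b.j b.N)) :
    ∃ m, b.N ≤ m ∧ m < b.N + b.M ∧ δ ∈ b.deltaBase m := by
  by_cases he : b.viaEmpty = true
  · rcases Nat.eq_zero_or_pos b.k with hk | hk
    · exfalso
      have hj := b.jk he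
      rw [hk] at hj
      have hN0 : b.N = 0 := by simp [TickedBranch.N, he, hk]
      rw [hN0, hj, b.empty_end he] at h
      exact absurd h (Finset.notMem_empty _)
    · have hN : b.N = b.k - 1 := by simp [TickedBranch.N, he]
      have hkk : b.k - 1 < b.k := by omega
      have htr := b.trans_step (b.k - 1) hkk
      have hU : (γ.until_ δ) ∈ b.Γ (b.j (b.k - 1) + 1) := by
        rw [htr.2]
        apply mem_nextLabel_next
        rw [← hN]
        exact h
      have hs0 : b.j (b.k - 1) + 1 ≤ b.n := by
        have := b.jlt _ hkk
        omega
      rcases run' (gamma_n_elem b) (b.n - (b.j (b.k - 1) + 1)) _ (by omega)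
        (fun t ht1 ht2 => statics_tail b hk t ht1 ht2) hU with
        hres | ⟨t, ht1, ht2, hres⟩
      · exact absurd hres.1 (by simp [Elementary])
      · have hres2 : δ ∈ b.Γ t ∨
            (γ ∈ b.Γ t ∧ LTL.next (γ.until_ δ) ∈ b.Γ t) := hres
        rcases hres2 with hδ | ⟨hγ, hXU⟩
        · refine ⟨b.N, le_rfl, N_lt b, ?_⟩
          rw [deltaBase_N b]
          exact Set.mem_union_right _ (mem_seg (by omega) ht2 hδ)
        · exfalso
          rcases run' (gamma_n_elem b) (b.n - t) t (by omega)
            (fun t' ht1' ht2' => statics_tail b hk t' (by omega) ht2') hXU with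
            hres' | ⟨t', _, _, hres'⟩
          · have hh := hres'.2
            rw [b.empty_end he] at hh
            exact absurd hh (Finset.notMem_empty _)
          · exact not_res_of_elem (by trivial) hres'
  · have hf : b.viaEmpty = false := by simpa using he
    have hN : b.N = b.l := by simp [TickedBranch.N, hf]
    have hle := b.loop_end hf
    obtain ⟨w, hw1, hw2, hw3⟩ := hle.2.2.2 γ δ (by rw [← hN]; exact h)
    have hk : 0 < b.k := by have := hle.1; omega
    have hNM := NMk b hk
    have hNk : b.N < b.k := by rw [hN]; exact hle.1
    by_cases hwt : b.j (b.k - 1) < w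
    · refine ⟨b.N, le_rfl, N_lt b, ?_⟩
      rw [deltaBase_N b]
      exact Set.mem_union_right _ (mem_seg (by omega) hw2 hw3)
    · push_neg at hwt
      classical
      have hex : ∃ m, w ≤ b.j m := ⟨b.k - 1, hwt⟩
      have hm1 : w ≤ b.j (Nat.find hex) := Nat.find_spec hex
      have hmk : Nat.find hex ≤ b.k - 1 := Nat.find_min' hex hwt
      have hNm : b.N < Nat.find hex := by
        by_contra h'
        push_neg at h'
        have h'' : b.j (Nat.find hex) ≤ b.j b.N := jmono' b h' hNk
        rw [hN] at h''
        omega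
      have hprev : b.j (Nat.find hex - 1) < w := by
        have := Nat.find_min hex (m := Nat.find hex - 1) (by omega)
        omega
      refine ⟨Nat.find hex, by omega, by omega, ?_⟩
      refine seg_sub_deltaBase b (mem_seg ?_ hm1 hw3)
      unfold st
      rw [if_neg (by omega : ¬ Nat.find hex = 0)]
      omega

lemma until_fulfilled (b : TickedBranch AP φ) (i : ℕ) {γ δ : LTL AP}
    (h : (γ.until_ δ) ∈ b.delta i) :
    ∃ m, i ≤ m ∧ δ ∈ b.delta m ∧ ∀ r, i ≤ r → r < m → γ ∈ b.delta r := by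
  classical
  have hC : ∀ d, (∀ e ≤ d, δ ∉ b.delta (i + e)) →
      γ ∈ b.delta (i + d) ∧ LTL.next (γ.until_ δ) ∈ b.delta (i + d) := by
    intro d
    induction d with
    | zero =>
      intro hno
      rcases delta_res b i h with hel | hres
      · exact hel.elim
      · have hres2 : δ ∈ b.delta i ∨
            (γ ∈ b.delta i ∧ LTL.next (γ.until_ δ) ∈ b.delta i) := hres
        rcases hres2 with h' | h'
        · exact absurd h' (by simpa using hno 0 le_rfl)
        · simpa using h'
    | succ d ih =>
      intro hno
      have hprev := ih (fun e he => hno e (by omega))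
      have hU : (γ.until_ δ) ∈ b.delta (i + d + 1) := delta_next b _ hprev.2
      rcases delta_res b (i + d + 1) hU with hel | hres
      · exact hel.elim
      · have hres2 : δ ∈ b.delta (i + d + 1) ∨
            (γ ∈ b.delta (i + d + 1) ∧
              LTL.next (γ.until_ δ) ∈ b.delta (i + d + 1)) := hres
        rcases hres2 with h' | h'
        · refine absurd h' ?_
          have := hno (d + 1) le_rfl
          rwa [show i + (d + 1) = i + d + 1 by omega] at this
        · rwa [show i + (d + 1) = i + d + 1 by omega]
  have hM := M_pos b
  have hmul : ∀ c : ℕ, c ≤ c * b.M := fun c => Nat.le_mul_of_pos_right c hM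
  have hex : ∃ m, i ≤ m ∧ δ ∈ b.delta m := by
    by_contra hno
    push_neg at hno
    have hall : ∀ d, LTL.next (γ.until_ δ) ∈ b.delta (i + d) :=
      fun d => (hC d (fun e _ => hno (i + e) (by omega))).2
    have hri : i ≤ b.N + (i + 1) * b.M := by
      have := hmul (i + 1)
      omega
    have h1 : LTL.next (γ.until_ δ) ∈ b.delta (b.N + (i + 1) * b.M) := by
      have := hall (b.N + (i + 1) * b.M - i)
      rwa [Nat.add_sub_cancel' hri] at this
    have h2 : LTL.next (γ.until_ δ) ∈ b.deltaBase b.N := by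
      rw [← delta_of_base b le_rfl (N_lt b) (i + 1)]
      exact h1
    have h3 := elem_end b (N_lt b) (by trivial) h2
    obtain ⟨m, hma, hmb, hmc⟩ := fulfill b h3
    have hd : δ ∈ b.delta (m + (i + 1) * b.M) := by
      rw [delta_of_base b hma hmb]
      exact hmc
    refine hno (m + (i + 1) * b.M) ?_ hd
    have := hmul (i + 1)
    omega
  have hspec := Nat.find_spec hex
  refine ⟨Nat.find hex, hspec.1, hspec.2, ?_⟩
  intro r hir hrm
  have hno' : ∀ e, e ≤ r - i → δ ∉ b.delta (i + e) := by
    intro e he hδ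
    exact Nat.find_min hex (by omega) ⟨by omega, hδ⟩
  have hγ := (hC (r - i) hno').1
  rwa [Nat.add_sub_cancel' hir] at hγ

end DeltaLemmas

section Main

variable {φ : LTL AP}

lemma shift_shift (σ : ℕ → Set AP) (a c : ℕ) :
    shift (shift σ a) c = shift σ (a + c) := by
  funext x
  simp [shift, Nat.add_assoc]

lemma len_pos : ∀ ψ : LTL AP, 0 < ψ.length := by
  intro ψ
  cases ψ <;> simp [LTL.length]

lemma main (b : TickedBranch AP φ) :
    ∀ L (ψ : LTL AP), ψ.length ≤ L → ∀ i, ψ ∈ b.delta i →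
      Sat (shift (fun t => {p : AP | LTL.atom p ∈ b.delta t}) i) ψ := by
  set w : ℕ → Set AP := fun t => {p : AP | LTL.atom p ∈ b.delta t} with hw
  intro L
  induction L with
  | zero =>
    intro ψ hψ
    have := len_pos ψ
    omega
  | succ L ih =>
    intro ψ hlen i hmem
    cases ψ with
    | atom p =>
      show LTL.atom p ∈ b.delta (i + 0)
      simpa using hmem
    | and γ δ =>
      rcases delta_res b i hmem with hel | hres
      · exact hel.elim
      · have hres2 : γ ∈ b.delta i ∧ δ ∈ b.delta i := hres
        have l1 := len_pos γ
        have l2 := len_pos δ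
        simp only [LTL.length] at hlen
        exact ⟨ih γ (by omega) i hres2.1, ih δ (by omega) i hres2.2⟩
    | next γ =>
      have h1 := delta_next b i hmem
      simp only [LTL.length] at hlen
      have h2 := ih γ (by omega) (i + 1) h1
      show Sat (shift (shift w i) 1) γ
      rwa [shift_shift]
    | until_ γ δ =>
      obtain ⟨m, him, hδ, hγ⟩ := until_fulfilled b i hmem
      simp only [LTL.length] at hlen
      have l1 := len_pos γ
      have l2 := len_pos δ
      refine ⟨m - i, ?_, ?_⟩
      · rw [shift_shift, Nat.add_sub_cancel' him]
        exact ih δ (by omega) m hδ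
      · intro x hx
        rw [shift_shift]
        exact ih γ (by omega) (i + x) (hγ (i + x) (by omega) (by omega))
    | neg ψ' =>
      cases ψ' with
      | atom p =>
        intro hc
        have h' : LTL.atom p ∈ b.delta (i + 0) := hc
        rw [Nat.add_zero] at h'
        exact delta_consistent b i h' hmem
      | neg γ =>
        rcases delta_res b i hmem with hel | hres
        · exact hel.elim
        · have hres2 : γ ∈ b.delta i := hres
          simp only [LTL.length] at hlen
          exact fun hc => hc (ih γ (by omega) i hres2)
      | and γ δ =>
        rcases delta_res b i hmem with hel | hres
        · exact hel.elim
        · have hres2 : LTL.neg γ ∈ b.delta i ∨ LTL.neg δ ∈ b.delta i := hres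
          simp only [LTL.length] at hlen
          have l1 := len_pos γ
          have l2 := len_pos δ
          rintro ⟨h1, h2⟩
          rcases hres2 with h' | h'
          · exact ih (LTL.neg γ) (by simp only [LTL.length]; omega) i h' h1
          · exact ih (LTL.neg δ) (by simp only [LTL.length]; omega) i h' h2
      | next γ =>
        have h1 := delta_neg_next b i hmem
        simp only [LTL.length] at hlen
        have h2 := ih (LTL.neg γ) (by simp only [LTL.length]; omega) (i + 1) h1
        intro hc
        have hc' : Sat (shift (shift w i) 1) γ := hc
        rw [shift_shift] at hc'
        exact h2 hc'
      | until_ γ δ =>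
        simp only [LTL.length] at hlen
        have l1 := len_pos γ
        have l2 := len_pos δ
        have hG : ∀ c s, LTL.neg (γ.until_ δ) ∈ b.delta s →
            Sat (shift w (s + c)) δ →
            (∀ x, x < c → Sat (shift w (s + x)) γ) → False := by
          intro c
          induction c with
          | zero =>
            intro s hs hd _
            rcases delta_res b s hs with hel | hres
            · exact hel.elim
            · have hres2 : (LTL.neg γ ∈ b.delta s ∧ LTL.neg δ ∈ b.delta s) ∨
                  (LTL.neg δ ∈ b.delta s ∧
                    LTL.next (LTL.neg (γ.until_ δ)) ∈ b.delta s) := hres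
              have hnd : LTL.neg δ ∈ b.delta s := by
                rcases hres2 with ⟨_, h'⟩ | ⟨h', _⟩ <;> exact h'
              have hsat := ih (LTL.neg δ) (by simp only [LTL.length]; omega) s hnd
              rw [Nat.add_zero] at hd
              exact hsat hd
          | succ c ihc =>
            intro s hs hd hg
            rcases delta_res b s hs with hel | hres
            · exact hel.elim
            · have hres2 : (LTL.neg γ ∈ b.delta s ∧ LTL.neg δ ∈ b.delta s) ∨
                  (LTL.neg δ ∈ b.delta s ∧
                    LTL.next (LTL.neg (γ.until_ δ)) ∈ b.delta s) := hres
              rcases hres2 with ⟨h1, _⟩ | ⟨_, h2⟩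
              · have hsat := ih (LTL.neg γ) (by simp only [LTL.length]; omega) s h1
                refine hsat ?_
                have := hg 0 (by omega)
                rwa [Nat.add_zero] at this
              · have hnext := delta_next b s h2
                refine ihc (s + 1) hnext ?_ ?_
                · rw [show s + 1 + c = s + (c + 1) by omega]
                  exact hd
                · intro x hx
                  rw [show s + 1 + x = s + (x + 1) by omega]
                  exact hg (x + 1) (by omega)
        intro hc
        obtain ⟨c, hd, hg⟩ := hc
        rw [shift_shift] at hd
        have hg' : ∀ x, x < c → Sat (shift w (i + x)) γ := by
          intro x hx
          have := hg x hx
          rwa [shift_shift] at this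
        exact hG c i hmem hd hg'

lemma phi_mem (b : TickedBranch AP φ) : φ ∈ b.delta 0 := by
  have h0 : φ ∈ b.Γ 0 := by
    rw [b.root]
    exact Finset.mem_singleton_self φ
  have h1 : φ ∈ seg b.Γ (st b 0) (b.j 0) :=
    mem_seg (by simp [st]) (Nat.zero_le _) h0
  rw [delta_eq, idx_zero]
  exact seg_sub_deltaBase b h1

end Main

end TruthAux

open LTL in
/-- Truth lemma: let `(Δ_i)` be the state-label sequence
extracted from a ticked branch of a tableau for `φ` and let
`w i = {p : atom p ∈ Δ_i}`. Then every `α ∈ Δ_i` is satisfied by `w_{≥i}`;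
in particular, since `φ ∈ Δ_0`, `w ⊨ φ`. -/
theorem truth_lemma {AP : Type} [DecidableEq AP] [Countable AP] {φ : LTL AP}
    (b : TickedBranch AP φ) :
    (∀ (α : LTL AP) (i : ℕ), α ∈ b.delta i →
      Sat (shift (fun i => {p : AP | LTL.atom p ∈ b.delta i}) i) α) ∧
    Sat (fun i => {p : AP | LTL.atom p ∈ b.delta i}) φ := by
  constructor
  · intro α i h
    exact TruthAux.main b α.length α le_rfl i h
  · have h := TruthAux.main b φ.length φ le_rfl 0 (TruthAux.phi_mem b)
    have hsh : shift (fun t => {p : AP | LTL.atom p ∈ b.delta t}) 0 =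
        (fun t => {p : AP | LTL.atom p ∈ b.delta t}) := by
      funext x
      simp [shift]
    rwa [hsh] at h
end
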